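/- arXiv:1204.6278 — 6 statements merged into one kernel-verified Lean document; each statement's English description precedes it below -/
import Mathlib

section
/- Let g ≥ 1, k ≥ 0 be integers and m_1, …, m_k ≥ 2 be integers, and let Γ = Γ(g; m_1, …, m_k) be the corresponding orbifold surface group. Then def(Γ) = 2g − 1; that is, Γ admits a finite presentation whose number of generators minus number of relators equals 2g − 1, and every finite presentation of Γ with a generators and b relators satisfies a − b ≤ 2g − 1. -/
/-- `Γ` admits a finite presentation with `a` generators and `b` relators,
i.e. `Γ` is isomorphic to a free group on `a` generators modulo the normal closure
of `b` relators. -/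
def IsPresentation (Γ : Type) [Group Γ] (a b : ℕ) : Prop :=
  ∃ r : Fin b → FreeGroup (Fin a), Nonempty (Γ ≃* PresentedGroup (Set.range r))

/-- `Γ` has deficiency `n`: some finite presentation realizes `a - b = n`, and every
finite presentation satisfies `a - b ≤ n`. -/
def HasDeficiency (Γ : Type) [Group Γ] (n : ℤ) : Prop :=
  (∃ a b : ℕ, IsPresentation Γ a b ∧ (a : ℤ) - (b : ℤ) = n) ∧
    ∀ a b : ℕ, IsPresentation Γ a b → (a : ℤ) - (b : ℤ) ≤ n

open scoped commutatorElement

/-- The relators of the orbifold surface group of genus `g` with `k` cone points of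
multiplicities `m 0, …, m (k-1)`: the long relator `[x_1,y_1]⋯[x_g,y_g]·z_1⋯z_k`
together with the relators `z_j ^ (m j)`. -/
def orbifoldRels (g k : ℕ) (m : Fin k → ℕ) : Set (FreeGroup (Fin g ⊕ Fin g ⊕ Fin k)) :=
  insert
    ((List.ofFn fun i : Fin g =>
        ⁅FreeGroup.of (Sum.inl i : Fin g ⊕ Fin g ⊕ Fin k),
          FreeGroup.of (Sum.inr (Sum.inl i))⁆).prod *
      (List.ofFn fun j : Fin k => FreeGroup.of (Sum.inr (Sum.inr j))).prod)
    (Set.range fun j : Fin k => FreeGroup.of (Sum.inr (Sum.inr j)) ^ m j)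

/-- The orbifold surface group `Γ(g; m 0, …, m (k-1))`. -/
abbrev OrbifoldSurfaceGroup (g k : ℕ) (m : Fin k → ℕ) : Type :=
  PresentedGroup (orbifoldRels g k m)

/-!
The rational Betti number `b₁(Γ)` is `2g`, since the `z_j` have finite order. For a presentation
`⟨Y | p⟩` of `Γ` with `a` generators and `b` relators, rank–nullity for the abelianized relation
matrix gives `a - b ≤ 2g`, and equality would make that matrix of full rank `b`. Then every
conjugation-invariant homomorphism from the relation subgroup `N_p` to `ℚ` would be the restriction
of a homomorphism `F(Y) → ℚ`. This property passes between presentations of the same group through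
lifts `α`, `β` of the isomorphism to the free groups. It fails for the standard presentation:
sending `x_i, y_i` to the generators of the Heisenberg group maps the relation subgroup into the
centre, and the central coordinate is an invariant homomorphism taking the value `g` on the long
relator and `0` on the `z_j ^ m_j`, whereas every homomorphism `F → ℚ` that kills the
`z_j ^ m_j` also kills the long relator. (Homologically: `a - b ≤ b₁ - b₂` and `b₂(Γ) = 1`.)
-/

section InvariantHom

variable {G A : Type*} [Group G] [CommGroup A]

structure IsInvariantHomOn (N : Subgroup G) (φ : G → A) : Prop where
  mul : ∀ n ∈ N, ∀ n' ∈ N, φ (n * n') = φ n * φ n'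
  conj : ∀ w, ∀ n ∈ N, φ (w * n * w⁻¹) = φ n

def ExtendsToHom (N : Subgroup G) (φ : G → A) : Prop :=
  ∃ ψ : G →* A, Set.EqOn φ ψ N

namespace IsInvariantHomOn

variable {N : Subgroup G} {φ : G → A}

lemma one (hφ : IsInvariantHomOn N φ) : φ 1 = 1 := by
  simpa using hφ.mul 1 N.one_mem 1 N.one_mem

lemma inv (hφ : IsInvariantHomOn N φ) {n : G} (hn : n ∈ N) : φ n⁻¹ = (φ n)⁻¹ := by
  rw [eq_inv_iff_mul_eq_one, ← hφ.mul _ (inv_mem hn) _ hn, inv_mul_cancel, hφ.one]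

lemma comp {H : Type*} [Group H] {M : Subgroup H} (hφ : IsInvariantHomOn N φ) (f : H →* G)
    (hf : M ≤ N.comap f) : IsInvariantHomOn M (φ ∘ f) where
  mul n hn n' hn' := by
    rw [Function.comp_apply, map_mul]
    exact hφ.mul _ (hf hn) _ (hf hn')
  conj w n hn := by
    rw [Function.comp_apply, map_mul, map_mul, map_inv]
    exact hφ.conj (f w) _ (hf hn)

lemma eqOn_normalClosure {R : Set G} (hφ : IsInvariantHomOn (Subgroup.normalClosure R) φ)
    (ψ : G →* A) (h : Set.EqOn φ ψ R) : Set.EqOn φ ψ (Subgroup.normalClosure R) := by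
  let K : Subgroup G :=
    { carrier := {n | n ∈ Subgroup.normalClosure R ∧ φ n = ψ n}
      one_mem' := ⟨one_mem _, by simp [hφ.one]⟩
      mul_mem' := fun ⟨hx, ex⟩ ⟨hy, ey⟩ =>
        ⟨mul_mem hx hy, by simp [hφ.mul _ hx _ hy, ex, ey]⟩
      inv_mem' := fun ⟨hx, ex⟩ => ⟨inv_mem hx, by simp [hφ.inv hx, ex]⟩ }
  have : K.Normal := ⟨fun n ⟨hn, en⟩ w => ⟨Subgroup.normalClosure_normal.conj_mem n hn w,
    by simp [hφ.conj w n hn, en, mul_comm (ψ w)]⟩⟩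
  have hRK : R ⊆ K := fun r hr => ⟨Subgroup.subset_normalClosure hr, h hr⟩
  exact fun n hn => (Subgroup.normalClosure_le_normal hRK hn).2

end IsInvariantHomOn

end InvariantHom

namespace PresentedGroup

variable {X Y : Type*} {R : Set (FreeGroup X)} {S : Set (FreeGroup Y)}

noncomputable def liftHom (f : PresentedGroup R →* PresentedGroup S) :
    FreeGroup X →* FreeGroup Y :=
  FreeGroup.lift fun x => (mk_surjective S (f (of x))).choose

lemma mk_liftHom (f : PresentedGroup R →* PresentedGroup S) (w : FreeGroup X) :
    mk S (liftHom f w) = f (mk R w) := by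
  suffices (mk S).comp (liftHom f) = f.comp (mk R) from DFunLike.congr_fun this w
  refine FreeGroup.ext_hom _ _ fun x => ?_
  simp only [MonoidHom.comp_apply, liftHom, FreeGroup.lift_apply_of]
  exact (mk_surjective S (f (of x))).choose_spec

lemma normalClosure_le_comap_liftHom (f : PresentedGroup R →* PresentedGroup S) :
    Subgroup.normalClosure R ≤ (Subgroup.normalClosure S).comap (liftHom f) := fun w hw => by
  rw [Subgroup.mem_comap, ← mk_eq_one_iff, mk_liftHom, mk_eq_one_iff.mpr hw, map_one]

lemma inv_mul_liftHom_symm_liftHom_mem (e : PresentedGroup R ≃* PresentedGroup S)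
    (w : FreeGroup X) :
    w⁻¹ * liftHom e.symm.toMonoidHom (liftHom e.toMonoidHom w) ∈ Subgroup.normalClosure R := by
  rw [← mk_eq_one_iff, map_mul, mk_liftHom, mk_liftHom]
  simp

end PresentedGroup

open PresentedGroup in
theorem IsInvariantHomOn.extendsToHom_of_comp_liftHom {X Y A : Type*} [CommGroup A]
    {R : Set (FreeGroup X)} {S : Set (FreeGroup Y)} (e : PresentedGroup R ≃* PresentedGroup S)
    {φ : FreeGroup X → A} (hφ : IsInvariantHomOn (Subgroup.normalClosure R) φ)
    (h : ExtendsToHom (Subgroup.normalClosure S) (φ ∘ liftHom e.symm.toMonoidHom)) :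
    ExtendsToHom (Subgroup.normalClosure R) φ := by
  obtain ⟨ψ, hψ⟩ := h
  set α := liftHom e.toMonoidHom
  set β := liftHom e.symm.toMonoidHom
  have hδ : ∀ w, w⁻¹ * β (α w) ∈ Subgroup.normalClosure R :=
    inv_mul_liftHom_symm_liftHom_mem e
  -- `D` is multiplicative because `φ` is invariant, and it agrees with `φ⁻¹` on `⟨⟨R⟩⟩`.
  let D : FreeGroup X →* A :=
    { toFun w := φ (w⁻¹ * β (α w)) / ψ (α w)
      map_one' := by simp [hφ.one]
      map_mul' w w' := by
        have : (w * w')⁻¹ * β (α (w * w')) =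
            (w'⁻¹ * (w⁻¹ * β (α w)) * w'⁻¹⁻¹) * (w'⁻¹ * β (α w')) := by
          simp only [map_mul]; group
        rw [this, hφ.mul _ (Subgroup.normalClosure_normal.conj_mem _ (hδ w) _) _ (hδ w'),
          hφ.conj _ _ (hδ w), map_mul, map_mul]
        exact (div_mul_div_comm _ _ _ _).symm }
  refine ⟨D⁻¹, fun n hn => ?_⟩
  have hαn := normalClosure_le_comap_liftHom e.toMonoidHom hn
  have hβαn := normalClosure_le_comap_liftHom e.symm.toMonoidHom hαn
  change φ n = (φ (n⁻¹ * β (α n)) / ψ (α n))⁻¹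
  rw [hφ.mul _ (inv_mem hn) _ hβαn, hφ.inv hn, ← hψ hαn, Function.comp_apply,
    mul_div_cancel_right, inv_inv]

theorem LinearMap.surjective_of_finrank_add_finrank_ker_le {K V W : Type*} [DivisionRing K]
    [AddCommGroup V] [Module K V] [AddCommGroup W] [Module K W] [FiniteDimensional K V]
    [FiniteDimensional K W] (f : V →ₗ[K] W)
    (h : Module.finrank K W + Module.finrank K (LinearMap.ker f) ≤ Module.finrank K V) :
    Function.Surjective f := by
  rw [← LinearMap.range_eq_top]
  refine Submodule.eq_top_of_finrank_eq (le_antisymm (Submodule.finrank_le _) ?_)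
  have := f.finrank_range_add_finrank_ker
  omega

section RelationMap

variable {X Y I : Type*}

def weightHom (v : X → ℚ) : FreeGroup X →* Multiplicative ℚ :=
  FreeGroup.lift fun x => .ofAdd (v x)

@[simp] lemma weightHom_of (v : X → ℚ) (x : X) : weightHom v (.of x) = .ofAdd (v x) :=
  FreeGroup.lift_apply_of

lemma weightHom_add (v v' : X → ℚ) : weightHom (v + v') = weightHom v * weightHom v' :=
  FreeGroup.ext_hom _ _ fun x => by simp [ofAdd_add]

lemma weightHom_smul (c : ℚ) (v : X → ℚ) :
    weightHom (c • v) = (AddMonoidHom.mulLeft c).toMultiplicative.comp (weightHom v) :=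
  FreeGroup.ext_hom _ _ fun x => by simp

/-- The transpose of the abelianized relation matrix of the relators `p`; its kernel is the space
of homomorphisms `⟨X | p⟩ → ℚ`, recorded by their values on the generators. -/
def relMap (p : I → FreeGroup X) : (X → ℚ) →ₗ[ℚ] (I → ℚ) where
  toFun v i := (weightHom v (p i)).toAdd
  map_add' v v' := funext fun i => by simp [weightHom_add]
  map_smul' c v := funext fun i => by simp [weightHom_smul]

lemma normalClosure_le_ker_weightHom {p : I → FreeGroup X} {v : X → ℚ}
    (hv : v ∈ LinearMap.ker (relMap p)) :
    Subgroup.normalClosure (Set.range p) ≤ (weightHom v).ker := by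
  refine Subgroup.normalClosure_le_normal ?_
  rintro _ ⟨i, rfl⟩
  exact congrFun hv i

lemma extendsToHom_of_surjective_relMap {p : I → FreeGroup X}
    (hp : Function.Surjective (relMap p)) {φ : FreeGroup X → Multiplicative ℚ}
    (hφ : IsInvariantHomOn (Subgroup.normalClosure (Set.range p)) φ) :
    ExtendsToHom (Subgroup.normalClosure (Set.range p)) φ := by
  obtain ⟨v, hv⟩ := hp fun i => (φ (p i)).toAdd
  refine ⟨weightHom v, hφ.eqOn_normalClosure _ ?_⟩
  rintro _ ⟨i, rfl⟩
  exact (congrFun hv i).symm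

open PresentedGroup in
lemma finrank_ker_relMap_le {J : Type*} [Fintype J] {R : Set (FreeGroup X)}
    (p : I → FreeGroup Y) (e : PresentedGroup R ≃* PresentedGroup (Set.range p)) (ι : J → X)
    (hι : ∀ ψ : FreeGroup X →* Multiplicative ℚ, (∀ r ∈ R, ψ r = 1) →
      (∀ j, ψ (.of (ι j)) = 1) → ψ = 1) :
    Module.finrank ℚ (LinearMap.ker (relMap p)) ≤ Fintype.card J := by
  set α := liftHom e.toMonoidHom
  let L := (relMap fun j => α (.of (ι j))).comp (LinearMap.ker (relMap p)).subtype
  have hL : Function.Injective L := by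
    rw [← LinearMap.ker_eq_bot, LinearMap.ker_eq_bot']
    rintro ⟨v, hv⟩ hLv
    have hker := normalClosure_le_ker_weightHom hv
    have hψ : (weightHom v).comp α = 1 := by
      refine hι _ (fun r hr => hker ?_) fun j => congrFun hLv j
      exact normalClosure_le_comap_liftHom _ (Subgroup.subset_normalClosure hr)
    ext y
    have hy := hker (inv_mul_liftHom_symm_liftHom_mem e.symm (.of y))
    rw [MonoidHom.mem_ker, map_mul, map_inv, inv_mul_eq_one] at hy
    simpa [hψ] using congrArg Multiplicative.toAdd (hy.trans (DFunLike.congr_fun hψ _))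
  simpa using LinearMap.finrank_le_finrank_of_injective hL

end RelationMap

theorem isPresentation_presentedGroup {X I : Type} [Fintype X] [Fintype I]
    (r : I → FreeGroup X) :
    IsPresentation (PresentedGroup (Set.range r)) (Fintype.card X) (Fintype.card I) := by
  let eX := FreeGroup.freeGroupCongr (Fintype.equivFin X)
  refine ⟨eX ∘ r ∘ (Fintype.equivFin I).symm, ⟨?_⟩⟩
  rw [Set.range_comp, (Fintype.equivFin I).symm.surjective.range_comp]
  exact PresentedGroup.equivPresentedGroup _ _

/-- The Heisenberg group over `ℚ`: `⟨x, y, z⟩` is the matrix `[[1, x, z], [0, 1, y], [0, 0, 1]]`. -/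
@[ext] structure Heisenberg where
  x : ℚ
  y : ℚ
  z : ℚ

namespace Heisenberg

instance : Mul Heisenberg := ⟨fun p q => ⟨p.x + q.x, p.y + q.y, p.z + q.z + p.x * q.y⟩⟩
instance : One Heisenberg := ⟨⟨0, 0, 0⟩⟩
instance : Inv Heisenberg := ⟨fun p => ⟨-p.x, -p.y, -p.z + p.x * p.y⟩⟩

@[simp] lemma mul_x (p q : Heisenberg) : (p * q).x = p.x + q.x := rfl
@[simp] lemma mul_y (p q : Heisenberg) : (p * q).y = p.y + q.y := rfl
@[simp] lemma mul_z (p q : Heisenberg) : (p * q).z = p.z + q.z + p.x * q.y := rfl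
@[simp] lemma one_x : (1 : Heisenberg).x = 0 := rfl
@[simp] lemma one_y : (1 : Heisenberg).y = 0 := rfl
@[simp] lemma one_z : (1 : Heisenberg).z = 0 := rfl
@[simp] lemma inv_x (p : Heisenberg) : p⁻¹.x = -p.x := rfl
@[simp] lemma inv_y (p : Heisenberg) : p⁻¹.y = -p.y := rfl
@[simp] lemma inv_z (p : Heisenberg) : p⁻¹.z = -p.z + p.x * p.y := rfl

instance : Group Heisenberg :=
  Group.ofLeftAxioms (fun _ _ _ => by ext <;> simp <;> ring) (fun _ => by ext <;> simp)
    (fun _ => by ext <;> simp)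

def abel : Heisenberg →* Multiplicative (ℚ × ℚ) where
  toFun p := .ofAdd (p.x, p.y)
  map_one' := rfl
  map_mul' _ _ := rfl

lemma commutator_eq :
    ⁅(⟨1, 0, 0⟩ : Heisenberg), (⟨0, 1, 0⟩ : Heisenberg)⁆ = (⟨0, 0, 1⟩ : Heisenberg) := by
  ext <;> simp [commutatorElement_def]

lemma central_pow (t : ℚ) (n : ℕ) : (⟨0, 0, t⟩ : Heisenberg) ^ n = ⟨0, 0, n * t⟩ := by
  induction n with
  | zero => ext <;> simp
  | succ n ih => ext <;> simp [pow_succ, ih]; ring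

end Heisenberg

namespace OrbifoldSurfaceGroup

variable (g k : ℕ)

def xGen (i : Fin g) : FreeGroup (Fin g ⊕ Fin g ⊕ Fin k) := .of (.inl i)
def yGen (i : Fin g) : FreeGroup (Fin g ⊕ Fin g ⊕ Fin k) := .of (.inr (.inl i))
def zGen (j : Fin k) : FreeGroup (Fin g ⊕ Fin g ⊕ Fin k) := .of (.inr (.inr j))

def longRel : FreeGroup (Fin g ⊕ Fin g ⊕ Fin k) :=
  (List.ofFn fun i => ⁅xGen g k i, yGen g k i⁆).prod * (List.ofFn (zGen g k)).prod

lemma orbifoldRels_eq (m : Fin k → ℕ) :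
    orbifoldRels g k m = insert (longRel g k) (Set.range fun j => zGen g k j ^ m j) := rfl

lemma longRel_mem (m : Fin k → ℕ) : longRel g k ∈ orbifoldRels g k m := Set.mem_insert _ _

lemma zGen_pow_mem (m : Fin k → ℕ) (j : Fin k) : zGen g k j ^ m j ∈ orbifoldRels g k m :=
  Set.mem_insert_of_mem _ ⟨j, rfl⟩

lemma map_longRel {A : Type*} [CommGroup A] (ψ : FreeGroup (Fin g ⊕ Fin g ⊕ Fin k) →* A) :
    ψ (longRel g k) = ∏ j, ψ (zGen g k j) := by
  simp [longRel, map_list_prod, List.map_ofFn, List.prod_ofFn, commutatorElement_def]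

theorem isPresentation (m : Fin k → ℕ) :
    IsPresentation (OrbifoldSurfaceGroup g k m) (g + (g + k)) (k + 1) := by
  have := isPresentation_presentedGroup (Fin.cons (longRel g k) fun j => zGen g k j ^ m j)
  rw [Fin.range_cons, ← orbifoldRels_eq] at this
  simpa using this

variable {g k} {m : Fin k → ℕ}

def xyGen : Fin g ⊕ Fin g → Fin g ⊕ Fin g ⊕ Fin k := Sum.elim .inl (.inr ∘ .inl)

lemma eq_one_of_map_xyGen (hm : ∀ j, m j ≠ 0)
    (ψ : FreeGroup (Fin g ⊕ Fin g ⊕ Fin k) →* Multiplicative ℚ)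
    (hψ : ∀ r ∈ orbifoldRels g k m, ψ r = 1) (hxy : ∀ i, ψ (.of (xyGen i)) = 1) : ψ = 1 := by
  refine FreeGroup.ext_hom _ _ ?_
  rintro (i | i | j)
  · exact hxy (.inl i)
  · exact hxy (.inr i)
  · change ψ (zGen g k j) = 1
    rw [← pow_eq_one_iff_left (hm j), ← map_pow]
    exact hψ _ (zGen_pow_mem g k m j)

variable (g k) in
def heisenbergRep : FreeGroup (Fin g ⊕ Fin g ⊕ Fin k) →* Heisenberg :=
  FreeGroup.lift <| Sum.elim (fun _ => ⟨1, 0, 0⟩) (Sum.elim (fun _ => ⟨0, 1, 0⟩) fun _ => 1)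

lemma heisenbergRep_longRel : heisenbergRep g k (longRel g k) = ⟨0, 0, g⟩ := by
  simp [longRel, map_list_prod, List.map_ofFn, Function.comp_def, heisenbergRep, xGen, yGen,
    zGen, Heisenberg.commutator_eq, Heisenberg.central_pow]

lemma heisenbergRep_zGen (j : Fin k) : heisenbergRep g k (zGen g k j) = 1 :=
  FreeGroup.lift_apply_of

lemma normalClosure_le_ker_abel_heisenbergRep :
    Subgroup.normalClosure (orbifoldRels g k m) ≤
      (Heisenberg.abel.comp (heisenbergRep g k)).ker := by
  refine Subgroup.normalClosure_le_normal fun r hr => ?_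
  rw [orbifoldRels_eq] at hr
  rcases hr with rfl | ⟨j, rfl⟩
  · simp [heisenbergRep_longRel, Heisenberg.abel]
  · simp [heisenbergRep_zGen]

variable (g k) in
def heisenbergFunctional (w : FreeGroup (Fin g ⊕ Fin g ⊕ Fin k)) : Multiplicative ℚ :=
  .ofAdd (heisenbergRep g k w).z

lemma isInvariantHomOn_heisenbergFunctional :
    IsInvariantHomOn (Subgroup.normalClosure (orbifoldRels g k m)) (heisenbergFunctional g k) := by
  have hcen : ∀ n ∈ Subgroup.normalClosure (orbifoldRels g k m),
      (heisenbergRep g k n).x = 0 ∧ (heisenbergRep g k n).y = 0 := fun n hn => by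
    simpa [Heisenberg.abel] using normalClosure_le_ker_abel_heisenbergRep hn
  refine ⟨fun n hn n' _ => ?_, fun w n hn => ?_⟩
  · simp [heisenbergFunctional, (hcen n hn).1, ← ofAdd_add]
  · simp only [heisenbergFunctional, map_mul, map_inv]
    congr 1
    simp [(hcen n hn).1, (hcen n hn).2]
    ring

lemma not_extendsToHom_heisenbergFunctional (hg : g ≠ 0) (hm : ∀ j, m j ≠ 0) :
    ¬ ExtendsToHom (Subgroup.normalClosure (orbifoldRels g k m)) (heisenbergFunctional g k) := by
  rintro ⟨ψ, hψ⟩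
  have hz : ∀ j, ψ (zGen g k j) = 1 := fun j => by
    rw [← pow_eq_one_iff_left (hm j), ← map_pow,
      ← hψ (Subgroup.subset_normalClosure (zGen_pow_mem g k m j))]
    simp [heisenbergFunctional, heisenbergRep_zGen]
  have hlong := hψ (Subgroup.subset_normalClosure (longRel_mem g k m))
  simp [heisenbergFunctional, heisenbergRep_longRel, map_longRel, hz] at hlong
  exact hg hlong

theorem sub_le_of_isPresentation (hg : g ≠ 0) (hm : ∀ j, m j ≠ 0) {a b : ℕ}
    (h : IsPresentation (OrbifoldSurfaceGroup g k m) a b) : (a : ℤ) - b ≤ 2 * g - 1 := by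
  obtain ⟨p, ⟨θ⟩⟩ := h
  by_contra! hab
  have hb₁ : Module.finrank ℚ (LinearMap.ker (relMap p)) ≤ g + g := by
    simpa using finrank_ker_relMap_le p θ xyGen (eq_one_of_map_xyGen hm)
  have hp : Function.Surjective (relMap p) :=
    (relMap p).surjective_of_finrank_add_finrank_ker_le (by simp; omega)
  have hφ := isInvariantHomOn_heisenbergFunctional (g := g) (m := m)
  have hβ := PresentedGroup.normalClosure_le_comap_liftHom θ.symm.toMonoidHom
  exact not_extendsToHom_heisenbergFunctional hg hm
    (hφ.extendsToHom_of_comp_liftHom θ (extendsToHom_of_surjective_relMap hp (hφ.comp _ hβ)))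

end OrbifoldSurfaceGroup

/-- The deficiency of the orbifold surface group `Γ(g; m_1, …, m_k)` with `g ≥ 1` and
all `m_i ≥ 2` equals `2g - 1`. -/
theorem deficiency_orbifoldSurfaceGroup (g k : ℕ) (hg : 1 ≤ g) (m : Fin k → ℕ)
    (hm : ∀ j, 2 ≤ m j) :
    HasDeficiency (OrbifoldSurfaceGroup g k m) (2 * (g : ℤ) - 1) := by
  refine ⟨⟨_, _, OrbifoldSurfaceGroup.isPresentation g k m, by push_cast; ring⟩, ?_⟩
  exact fun a b => OrbifoldSurfaceGroup.sub_le_of_isPresentation (Nat.one_le_iff_ne_zero.mp hg)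
    fun j => (two_pos.trans_le (hm j)).ne'
end

section
/- (Morse inequality / P. Hall's inequality) Let Γ be a group admitting a finite presentation with a generators and b relators, and let K be a field. Then a − b ≤ b_1(Γ; K) − b_2(Γ; K). In particular, def(Γ) ≤ b_1(Γ; K) − b_2(Γ; K). -/
/-- `bettiNumber K Γ i` is the `K`-dimension of the group cohomology `H^i(Γ; K)`
with trivial coefficients. -/
noncomputable def bettiNumber (K : Type) [Field K] (Γ : Type) [Group Γ] (i : ℕ) : ℕ :=
  Module.finrank K (groupCohomology (Rep.trivial K Γ K) i)

/-!
A 1-cocycle with trivial coefficients is a homomorphism `Γ → K`; through the presentation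
`π : F(α) → Γ` it is determined by its values on the generators, which form exactly the vectors
killed by the abelianized relation matrix `A : K^α → K^ι`. So `b₁ = dim ker A`.

A 2-cocycle `σ` defines a central extension `K ×_σ Γ`. Lifting every generator to it gives a
homomorphism from `F(α)`, which maps each relator into the central copy of `K`; this produces a
vector in `K^ι`, linear in `σ`, and well defined modulo the image of `A` (the effect of changing
the lifts). If that vector lies in the image of `A`, the lifts can be chosen so that every relator
maps to `1`; the lift then factors through `Γ` and splits the extension, so `σ` is a coboundary.
Hence `H²(Γ; K)` embeds into `coker A`, and `b₁ - b₂ ≥ dim ker A - dim coker A = |α| - |ι|`.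
-/

universe u

open groupCohomology Module Multiplicative

theorem finrank_le_of_surjective_of_ker_le {K V W U : Type*} [DivisionRing K] [AddCommGroup V]
    [Module K V] [AddCommGroup W] [Module K W] [AddCommGroup U] [Module K U]
    [FiniteDimensional K U] {f : V →ₗ[K] W} (hf : Function.Surjective f) (g : V →ₗ[K] U)
    (h : LinearMap.ker g ≤ LinearMap.ker f) : finrank K W ≤ finrank K U := by
  have e := g.quotKerEquivRange
  have : Module.Finite K (V ⧸ LinearMap.ker g) := Module.Finite.equiv e.symm
  calc finrank K W = finrank K (V ⧸ LinearMap.ker f) :=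
        (f.quotKerEquivOfSurjective hf).finrank_eq.symm
    _ ≤ finrank K (V ⧸ LinearMap.ker g) :=
        LinearMap.finrank_le_finrank_of_surjective (f := Submodule.factor h)
          (Submodule.Quotient.mk_surjective _ |>.forall.2 fun x => ⟨Submodule.Quotient.mk x, rfl⟩)
    _ = finrank K (LinearMap.range g) := e.finrank_eq
    _ ≤ finrank K U := Submodule.finrank_le _

section

variable {k G M : Type u} [CommRing k] [Group G] [AddCommGroup M] [Module k M]

theorem cocycles₂_trivial_condition (f : cocycles₂ (Rep.trivial k G M)) (g h j : G) :
    f (g * h, j) + f (g, h) = f (h, j) + f (g, h * j) := by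
  simpa using (mem_cocycles₂_iff f).1 f.2 g h j

theorem cocycles₂_trivial_map_inv_fst (f : cocycles₂ (Rep.trivial k G M)) (g : G) :
    f (g⁻¹, g) = f (g, g⁻¹) := by
  simpa [cocycles₂_map_one_snd f g, sub_eq_zero] using cocycles₂_ρ_map_inv_sub_map_inv f g

@[ext]
structure CentralExtension (f : cocycles₂ (Rep.trivial k G M)) where
  fst : M
  snd : G

namespace CentralExtension

variable {f : cocycles₂ (Rep.trivial k G M)}

instance : Mul (CentralExtension f) :=
  ⟨fun x y => ⟨x.fst + y.fst + f (x.snd, y.snd), x.snd * y.snd⟩⟩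

-- `f` need not be normalized, so the identity is not `(0, 1)`.
instance : One (CentralExtension f) := ⟨⟨-f (1, 1), 1⟩⟩

instance : Inv (CentralExtension f) :=
  ⟨fun x => ⟨-x.fst - f (x.snd, x.snd⁻¹) - f (1, 1), x.snd⁻¹⟩⟩

@[simp]
theorem mul_fst (x y : CentralExtension f) : (x * y).fst = x.fst + y.fst + f (x.snd, y.snd) :=
  rfl

@[simp]
theorem mul_snd (x y : CentralExtension f) : (x * y).snd = x.snd * y.snd := rfl

@[simp]
theorem one_fst : (1 : CentralExtension f).fst = -f (1, 1) := rfl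

@[simp]
theorem one_snd : (1 : CentralExtension f).snd = 1 := rfl

@[simp]
theorem inv_fst (x : CentralExtension f) : x⁻¹.fst = -x.fst - f (x.snd, x.snd⁻¹) - f (1, 1) :=
  rfl

@[simp]
theorem inv_snd (x : CentralExtension f) : x⁻¹.snd = x.snd⁻¹ := rfl

instance : Group (CentralExtension f) :=
  Group.ofLeftAxioms
    (fun x y z => by
      ext
      · simp only [mul_fst, mul_snd]
        linear_combination (norm := module) cocycles₂_trivial_condition f x.snd y.snd z.snd
      · exact mul_assoc _ _ _)
    (fun x => by ext <;> simp [cocycles₂_map_one_fst])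
    (fun x => by
      ext
      · simp only [mul_fst, inv_fst, inv_snd, one_fst, cocycles₂_trivial_map_inv_fst]
        abel
      · exact inv_mul_cancel _)

variable (f) in
def sndHom : CentralExtension f →* G where
  toFun := snd
  map_one' := rfl
  map_mul' _ _ := rfl

@[simp]
theorem sndHom_apply (x : CentralExtension f) : sndHom f x = x.snd := rfl

theorem mem_coboundaries₂_of_section (s : G →* CentralExtension f)
    (hs : (sndHom f).comp s = MonoidHom.id G) : ⇑f ∈ coboundaries₂ (Rep.trivial k G M) := by
  have hsnd (g : G) : (s g).snd = g := DFunLike.congr_fun hs g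
  refine ⟨fun g => -(s g).fst, funext fun ⟨g, h⟩ => ?_⟩
  simp only [d₁₂_hom_apply, Representation.isTrivial_def, LinearMap.id_coe, id_eq, map_mul,
    mul_fst, hsnd]
  abel

end CentralExtension

end

-- `linearize w` is `v ↦ ∑ i, eᵢ(w) • v i`, where `eᵢ(w)` is the exponent sum of `i` in `w`.
noncomputable def FreeGroup.linearize (k : Type*) {α : Type*} [CommRing k] :
    FreeGroup α →* Multiplicative (Module.Dual k (α → k)) :=
  FreeGroup.lift fun i => ofAdd (LinearMap.proj i)

noncomputable def relationMatrix {k α ι : Type*} [CommRing k] (r : ι → FreeGroup α) :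
    (α → k) →ₗ[k] (ι → k) :=
  LinearMap.pi fun j => toAdd (FreeGroup.linearize k (r j))

theorem relationMatrix_apply {k α ι : Type*} [CommRing k] (r : ι → FreeGroup α) (v : α → k)
    (j : ι) : relationMatrix r v j = toAdd (FreeGroup.lift (ofAdd ∘ v) (r j)) := by
  have : (AddMonoidHom.toMultiplicative (LinearMap.applyₗ v).toAddMonoidHom).comp
      (FreeGroup.linearize k) = FreeGroup.lift (ofAdd ∘ v) :=
    FreeGroup.ext_hom _ _ fun i => by simp [FreeGroup.linearize]
  exact congrArg toAdd (DFunLike.congr_fun this (r j))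

section Presentation

variable {k α ι Γ : Type*} [CommRing k] [Group Γ] (r : ι → FreeGroup α) {π : FreeGroup α →* Γ}

theorem exists_comp_eq_of_map_relator_eq_one (hπ : Function.Surjective π)
    (hker : π.ker = Subgroup.normalClosure (Set.range r)) {H : Type*} [Group H]
    (φ : FreeGroup α →* H) (hφ : ∀ j, φ (r j) = 1) : ∃ ψ : Γ →* H, ψ.comp π = φ := by
  have hle : π.ker ≤ φ.ker :=
    hker ▸ Subgroup.normalClosure_le_normal (by rintro _ ⟨j, rfl⟩; exact hφ j)
  exact ⟨π.liftOfSurjective hπ ⟨φ, hle⟩, π.liftOfRightInverse_comp _ _ _⟩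

theorem map_relator_eq_one (hker : π.ker = Subgroup.normalClosure (Set.range r)) (j : ι) :
    π (r j) = 1 :=
  (MonoidHom.mem_ker).1 (hker ▸ Subgroup.subset_normalClosure ⟨j, rfl⟩)

variable (k π) in
def restrictToGenerators : (Additive Γ →+ k) →ₗ[k] (α → k) where
  toFun ψ i := ψ (.ofMul (π (.of i)))
  map_add' _ _ := rfl
  map_smul' _ _ := rfl

theorem restrictToGenerators_injective (hπ : Function.Surjective π) :
    Function.Injective (restrictToGenerators k π) := by
  intro ψ χ h
  have hcomp : (AddMonoidHom.toMultiplicativeRight ψ).comp π =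
      (AddMonoidHom.toMultiplicativeRight χ).comp π :=
    FreeGroup.ext_hom _ _ fun i => congrFun h i
  exact AddMonoidHom.toMultiplicativeRight.injective ((MonoidHom.cancel_right hπ).1 hcomp)

theorem ker_relationMatrix_le_range_restrictToGenerators (hπ : Function.Surjective π)
    (hker : π.ker = Subgroup.normalClosure (Set.range r)) :
    LinearMap.ker (relationMatrix r) ≤ LinearMap.range (restrictToGenerators k π) := by
  intro v hv
  obtain ⟨ψ, hψ⟩ := exists_comp_eq_of_map_relator_eq_one r hπ hker (FreeGroup.lift (ofAdd ∘ v))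
    fun j => by simpa [relationMatrix_apply] using congrFun hv j
  refine ⟨AddMonoidHom.toMultiplicativeRight.symm ψ, funext fun i => ?_⟩
  simpa [restrictToGenerators] using congrArg toAdd (DFunLike.congr_fun hψ (.of i))

end Presentation

section SecondCohomology

variable {k Γ M : Type u} {α ι : Type*} [CommRing k] [Group Γ] [AddCommGroup M] [Module k M]
  (r : ι → FreeGroup α) {π : FreeGroup α →* Γ}

open CentralExtension

variable (π) in
def liftGenerators (f : cocycles₂ (Rep.trivial k Γ M)) (u : α → M) :
    FreeGroup α →* CentralExtension f :=
  FreeGroup.lift fun i => ⟨u i, π (.of i)⟩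

theorem sndHom_comp_liftGenerators (f : cocycles₂ (Rep.trivial k Γ M)) (u : α → M) :
    (sndHom f).comp (liftGenerators π f u) = π :=
  FreeGroup.ext_hom _ _ fun _ => by simp [liftGenerators]

@[simp]
theorem liftGenerators_snd (f : cocycles₂ (Rep.trivial k Γ M)) (u : α → M) (w : FreeGroup α) :
    (liftGenerators π f u w).snd = π w :=
  DFunLike.congr_fun (sndHom_comp_liftGenerators f u) w

theorem mem_coboundaries₂_of_liftGenerators_relator_eq_one (hπ : Function.Surjective π)
    (hker : π.ker = Subgroup.normalClosure (Set.range r)) (f : cocycles₂ (Rep.trivial k Γ M))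
    (u : α → M) (hu : ∀ j, liftGenerators π f u (r j) = 1) :
    ⇑f ∈ coboundaries₂ (Rep.trivial k Γ M) := by
  obtain ⟨s, hs⟩ := exists_comp_eq_of_map_relator_eq_one r hπ hker _ hu
  refine mem_coboundaries₂_of_section s ((MonoidHom.cancel_right hπ).1 ?_)
  rw [MonoidHom.comp_assoc, hs, sndHom_comp_liftGenerators]
  rfl

-- Working in the extension by the dual of `Z²(Γ; k)` makes the relator values linear in `σ`.
variable (k Γ) in
def universalCocycle :
    cocycles₂ (Rep.trivial k Γ (Module.Dual k (cocycles₂ (Rep.trivial k Γ k)))) :=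
  ⟨fun p => (LinearMap.proj p).comp (Submodule.subtype _), (mem_cocycles₂_iff _).2 fun g h j => by
    ext σ
    simpa using cocycles₂_trivial_condition σ g h j⟩

@[simp]
theorem universalCocycle_apply (p : Γ × Γ) (σ : cocycles₂ (Rep.trivial k Γ k)) :
    DFunLike.coe (F := cocycles₂ (Rep.trivial k Γ k) →ₗ[k] k) (universalCocycle k Γ p) σ = σ p :=
  rfl

-- The central subgroup of `CentralExtension σ` is `{(m - σ (1, 1), 1)}`, hence the shift.
variable (π) in
noncomputable def relatorValues : cocycles₂ (Rep.trivial k Γ k) →ₗ[k] (ι → k) :=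
  LinearMap.pi fun j =>
    (liftGenerators π (universalCocycle k Γ) 0 (r j)).fst + universalCocycle k Γ (1, 1)

theorem liftGenerators_fst (σ : cocycles₂ (Rep.trivial k Γ k)) (u : α → k) (w : FreeGroup α) :
    (liftGenerators π σ u w).fst =
      (liftGenerators π (universalCocycle k Γ) 0 w).fst σ +
        toAdd (FreeGroup.linearize k w) u := by
  induction w using FreeGroup.induction_on with
  | C1 => simp
  | of i => simp [liftGenerators, FreeGroup.linearize]
  | inv_of i h =>
    simp only [map_inv, inv_fst, h, liftGenerators_snd, LinearMap.sub_apply, LinearMap.neg_apply,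
      universalCocycle_apply, toAdd_inv]
    ring
  | mul x y hx hy =>
    simp only [map_mul, mul_fst, hx, hy, liftGenerators_snd, LinearMap.add_apply,
      universalCocycle_apply, toAdd_mul]
    ring

theorem mem_coboundaries₂_of_relatorValues_mem_range (hπ : Function.Surjective π)
    (hker : π.ker = Subgroup.normalClosure (Set.range r)) (σ : cocycles₂ (Rep.trivial k Γ k))
    (hσ : relatorValues r π σ ∈ LinearMap.range (relationMatrix r)) :
    ⇑σ ∈ coboundaries₂ (Rep.trivial k Γ k) := by
  obtain ⟨u, hu⟩ := hσ
  refine mem_coboundaries₂_of_liftGenerators_relator_eq_one r hπ hker σ (-u) fun j => ?_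
  have huj := congrFun hu j
  simp only [relationMatrix, relatorValues, LinearMap.pi_apply] at huj
  ext
  · simp [liftGenerators_fst, huj]
  · simp [map_relator_eq_one r hker]

end SecondCohomology

section Dimension

variable {K Γ : Type u} {α ι : Type*} [Field K] [Group Γ] (r : ι → FreeGroup α)
  {π : FreeGroup α →* Γ}

theorem finrank_ker_relationMatrix_le_finrank_H1 [Finite α] (hπ : Function.Surjective π)
    (hker : π.ker = Subgroup.normalClosure (Set.range r)) :
    finrank K (LinearMap.ker (relationMatrix (k := K) r)) ≤ finrank K (H1 (Rep.trivial K Γ K)) :=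
  calc finrank K (LinearMap.ker (relationMatrix (k := K) r))
      ≤ finrank K (LinearMap.range (restrictToGenerators K π)) :=
        Submodule.finrank_mono (ker_relationMatrix_le_range_restrictToGenerators r hπ hker)
    _ = finrank K (Additive Γ →+ K) := LinearMap.finrank_range_of_inj
        (restrictToGenerators_injective hπ)
    _ = finrank K (H1 (Rep.trivial K Γ K)) :=
        (H1IsoOfIsTrivial (Rep.trivial K Γ K)).toLinearEquiv.finrank_eq.symm

theorem finrank_H2_le_finrank_coker_relationMatrix [Finite ι] (hπ : Function.Surjective π)
    (hker : π.ker = Subgroup.normalClosure (Set.range r)) :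
    finrank K (H2 (Rep.trivial K Γ K)) ≤
      finrank K ((ι → K) ⧸ LinearMap.range (relationMatrix (k := K) r)) := by
  have hsurj : Function.Surjective (H2π (Rep.trivial K Γ K)).hom :=
    (ModuleCat.epi_iff_surjective _).1 inferInstance
  have hle : LinearMap.ker ((LinearMap.range (relationMatrix r)).mkQ ∘ₗ relatorValues r π) ≤
      LinearMap.ker (H2π (Rep.trivial K Γ K)).hom := fun σ hσ => by
    rw [LinearMap.mem_ker, H2π_eq_zero_iff]
    exact mem_coboundaries₂_of_relatorValues_mem_range r hπ hker σ
      ((Submodule.Quotient.mk_eq_zero _).1 hσ)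
  exact finrank_le_of_surjective_of_ker_le hsurj _ hle

theorem card_sub_card_le_finrank_H1_sub_finrank_H2 [Fintype α] [Fintype ι]
    (hπ : Function.Surjective π) (hker : π.ker = Subgroup.normalClosure (Set.range r)) :
    (Fintype.card α : ℤ) - Fintype.card ι ≤
      finrank K (H1 (Rep.trivial K Γ K)) - finrank K (H2 (Rep.trivial K Γ K)) := by
  have h1 := finrank_ker_relationMatrix_le_finrank_H1 (K := K) r hπ hker
  have h2 := finrank_H2_le_finrank_coker_relationMatrix (K := K) r hπ hker
  have hrank := (relationMatrix (k := K) r).finrank_range_add_finrank_ker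
  have hcoker := (LinearMap.range (relationMatrix (k := K) r)).finrank_quotient_add_finrank
  simp only [finrank_fintype_fun_eq_card] at hrank hcoker
  omega

end Dimension

theorem IsPresentation.sub_le_bettiNumber_sub {Γ : Type} [Group Γ] (K : Type) [Field K]
    {a b : ℕ} (h : IsPresentation Γ a b) :
    (a : ℤ) - b ≤ (bettiNumber K Γ 1 : ℤ) - bettiNumber K Γ 2 := by
  obtain ⟨r, ⟨e⟩⟩ := h
  have hker : (e.symm.toMonoidHom.comp (PresentedGroup.mk (Set.range r))).ker =
      Subgroup.normalClosure (Set.range r) := by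
    rw [MonoidHom.ker_comp_of_injective _ _ e.symm.injective]
    exact QuotientGroup.ker_mk' _
  simpa only [Fintype.card_fin, bettiNumber] using
    card_sub_card_le_finrank_H1_sub_finrank_H2 (K := K) r
      (e.symm.surjective.comp (PresentedGroup.mk_surjective _)) hker

/-- Morse inequality (P. Hall's inequality): if `Γ` has a finite presentation with `a`
generators and `b` relators and `K` is a field, then `a - b ≤ b_1(Γ; K) - b_2(Γ; K)`;
in particular `def(Γ) ≤ b_1(Γ; K) - b_2(Γ; K)`. -/
theorem deficiency_le_betti_sub_betti (Γ : Type) [Group Γ] (K : Type) [Field K]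
    (a b : ℕ) (h : IsPresentation Γ a b) :
    (a : ℤ) - (b : ℤ) ≤ (bettiNumber K Γ 1 : ℤ) - (bettiNumber K Γ 2 : ℤ) ∧
      ∀ n : ℤ, HasDeficiency Γ n →
        n ≤ (bettiNumber K Γ 1 : ℤ) - (bettiNumber K Γ 2 : ℤ) := by
  exact ⟨h.sub_le_bettiNumber_sub K, fun n ⟨⟨_, _, h', hn⟩, _⟩ => hn ▸ h'.sub_le_bettiNumber_sub K⟩
end

section
/- Let p be a prime, Δ a surface group of genus h ≥ 1, and Δ̄ ≤ Δ a subgroup of index p. Let 1 → Z → G → Δ → 1 be a central extension with Z cyclic of order p (i.e. Z is a central subgroup of G of order p and π : G → Δ is a surjection with kernel Z). Then the extension splits over Δ̄: there exists a group homomorphism s : Δ̄ → G with π ∘ s equal to the inclusion of Δ̄ into Δ; consequently the preimage π^{-1}(Δ̄) is isomorphic to Z × Δ̄. -/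
open scoped commutatorElement

/-- The surface relator `[x_1,y_1]⋯[x_g,y_g]` in the free group on `x_1,…,x_g,y_1,…,y_g`. -/
def surfaceRel (g : ℕ) : FreeGroup (Fin g ⊕ Fin g) :=
  (List.ofFn fun i : Fin g =>
    ⁅FreeGroup.of (Sum.inl i : Fin g ⊕ Fin g), FreeGroup.of (Sum.inr i)⁆).prod

/-- The genus-`g` surface group `⟨x_1,y_1,…,x_g,y_g ∣ [x_1,y_1]⋯[x_g,y_g]⟩`. -/
abbrev SurfaceGroup (g : ℕ) : Type :=
  PresentedGroup ({surfaceRel g} : Set (FreeGroup (Fin g ⊕ Fin g)))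

/-!
Put `X = Δ ⧸ Δ'` and lift the generators of `Δ` to `ℓ : F → G`, `F` the free group; the relator
`R` goes to an element `z = ℓ R` of `Z`, so `z ^ |X| = 1`. A coefficient system
`c : {x_k, y_k} → (X → Z)` extends to the Fox crossed homomorphism `fox c : F → (X → Z)`. The
subgroup of all `fox c R` contains `v ∘ g⁻¹ / v` for every `v` and every `g` in a generating set of
`Δ` (read off from the Fox derivatives of `R`), hence for every `g ∈ Δ`; as `Δ` is transitive on
`X` and `z ^ |X| = 1`, it contains the constant function `z`. For such a `c`, the map
`w ↦ (x ↦ ℓ w * (fox c w x)⁻¹, w)` into the wreath product `(X → G) ⋊ Δ` kills `R`, so it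
descends to `Δ`, and the first coordinate evaluated at the point `Δ'` of `X` is a homomorphism on
its stabilizer `Δ'` lifting the inclusion, because `fox c` takes values in `Z = ker π`.
-/

open MulAction Subgroup

section Fox

variable {α Q X M : Type*} [Group Q] [MulAction Q X] [Group M] (q : FreeGroup α →* Q)

def foxLift (c : α → X → M) : FreeGroup α →* (X → M) ⋊[mulAutArrow] Q :=
  FreeGroup.lift fun a => ⟨c a, q (.of a)⟩

-- In Fox calculus, `fox q c w = ∑ₐ (∂w/∂a) • c a`.
def fox (c : α → X → M) (w : FreeGroup α) : X → M :=
  (foxLift q c w).left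

variable {q}

@[simp]
theorem foxLift_right (c : α → X → M) (w : FreeGroup α) : (foxLift q c w).right = q w := by
  have : SemidirectProduct.rightHom.comp (foxLift q c) = q :=
    FreeGroup.ext_hom _ _ fun a => by simp [foxLift]
  exact DFunLike.congr_fun this w

@[simp]
theorem fox_of (c : α → X → M) (a : α) : fox q c (.of a) = c a := by
  simp [fox, foxLift]

@[simp]
theorem fox_one (c : α → X → M) : fox q c 1 = 1 := by
  simp [fox]

theorem fox_mul (c : α → X → M) (w₁ w₂ : FreeGroup α) (x : X) :
    fox q c (w₁ * w₂) x = fox q c w₁ x * fox q c w₂ ((q w₁)⁻¹ • x) := by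
  rw [fox, map_mul, SemidirectProduct.mul_left, ← foxLift_right (q := q) c w₁]
  rfl

theorem fox_inv (c : α → X → M) (w : FreeGroup α) (x : X) :
    fox q c w⁻¹ x = (fox q c w (q w • x))⁻¹ := by
  rw [fox, map_inv, SemidirectProduct.inv_left, ← foxLift_right (q := q) c w]
  show (fox q c w ((foxLift q c w).right⁻¹⁻¹ • x))⁻¹ = _
  rw [inv_inv]

end Fox

section FoxComm

variable {α Q X M : Type*} [Group Q] [MulAction Q X] [CommGroup M] {q : FreeGroup α →* Q}

theorem fox_mul_coeff (c c' : α → X → M) (w : FreeGroup α) :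
    fox q (c * c') w = fox q c w * fox q c' w := by
  let φ : FreeGroup α →* (X → M) ⋊[mulAutArrow] Q :=
    { toFun w := ⟨fox q c w * fox q c' w, q w⟩
      map_one' := by ext <;> simp
      map_mul' w₁ w₂ := by
        ext x
        · show fox q c (w₁ * w₂) x * fox q c' (w₁ * w₂) x =
            _ * (fox q c w₂ ((q w₁)⁻¹ • x) * fox q c' w₂ ((q w₁)⁻¹ • x))
          rw [fox_mul, fox_mul, mul_mul_mul_comm]; rfl
        · exact map_mul q w₁ w₂ }
  have : foxLift q (c * c') = φ := FreeGroup.ext_hom _ _ fun a => by ext <;> simp [φ, foxLift]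
  exact congrArg SemidirectProduct.left (DFunLike.congr_fun this w)

variable (q) in
def foxHom (w : FreeGroup α) : (α → X → M) →* (X → M) :=
  MonoidHom.mk' (fun c => fox q c w) fun c c' => fox_mul_coeff c c' w

theorem fox_list_prod (c : α → X → M) (l : List (FreeGroup α)) (x : X) :
    fox q c l.prod x = ∏ i : Fin l.length, fox q c l[i] ((q (l.take i).prod)⁻¹ • x) := by
  induction l generalizing x with
  | nil => simp
  | cons a l ih => simp [fox_mul, ih, Fin.prod_univ_succ, mul_smul]

end FoxComm

section FixingSubgroupModulo

variable (Q : Type*) {X M : Type*} [Group Q] [MulAction Q X] [CommGroup M]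

def fixingSubgroupModulo (W : Subgroup (X → M)) : Subgroup Q where
  carrier := {g | ∀ v : X → M, (fun x => v (g⁻¹ • x)) / v ∈ W}
  one_mem' v := by simp
  mul_mem' {g₁ g₂} h₁ h₂ v := by
    convert W.mul_mem (h₁ fun x => v (g₂⁻¹ • x)) (h₂ v) using 1
    ext x
    simp [mul_smul]
  inv_mem' {g} h v := by
    convert W.inv_mem (h fun x => v (g • x)) using 1
    ext x
    simp

variable {Q}

theorem const_mem_of_fixingSubgroupModulo_eq_top [Finite X] [IsPretransitive Q X]
    {W : Subgroup (X → M)} (hW : fixingSubgroupModulo Q W = ⊤) {a : M}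
    (ha : a ^ Nat.card X = 1) : (fun _ => a) ∈ W := by
  classical
  rcases isEmpty_or_nonempty X with _ | ⟨⟨x₀⟩⟩
  · exact Subsingleton.elim (1 : X → M) (fun _ => a) ▸ W.one_mem
  have := Fintype.ofFinite X
  have hsingle (x : X) : Pi.mulSingle x a / Pi.mulSingle x₀ a ∈ W := by
    obtain ⟨g, rfl⟩ := exists_smul_eq Q x₀ x
    convert (hW ▸ mem_top g : g ∈ fixingSubgroupModulo Q W) (Pi.mulSingle x₀ a) using 2
    ext y
    simp [Pi.mulSingle_apply, inv_smul_eq_iff]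
  have hconst : (fun _ => a) = (∏ x, Pi.mulSingle x a / Pi.mulSingle x₀ a) *
      Pi.mulSingle x₀ (a ^ Nat.card X) := by
    rw [Finset.prod_div_distrib, Finset.prod_const, Finset.card_univ, Pi.mulSingle_pow,
      Nat.card_eq_fintype_card, div_mul_cancel, Finset.univ_prod_mulSingle (fun _ => a)]
  rw [hconst, ha, Pi.mulSingle_one, mul_one]
  exact W.prod_mem fun x _ => hsingle x

end FixingSubgroupModulo

namespace SurfaceGroup

variable {h : ℕ}

abbrev freeX (k : Fin h) : FreeGroup (Fin h ⊕ Fin h) := FreeGroup.of (Sum.inl k)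

abbrev freeY (k : Fin h) : FreeGroup (Fin h ⊕ Fin h) := FreeGroup.of (Sum.inr k)

abbrev mk : FreeGroup (Fin h ⊕ Fin h) →* SurfaceGroup h := PresentedGroup.mk _

variable (h) in
def relPrefix (n : ℕ) : FreeGroup (Fin h ⊕ Fin h) :=
  ((List.ofFn fun i : Fin h => ⁅freeX i, freeY i⁆).take n).prod

variable (h) in
theorem relPrefix_zero : relPrefix h 0 = 1 := by
  simp [relPrefix]

theorem relPrefix_succ (k : Fin h) : relPrefix h (k + 1) = relPrefix h k * ⁅freeX k, freeY k⁆ := by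
  simp [relPrefix, List.prod_take_succ]

theorem eq_top_of_conj_mem (S : Subgroup (SurfaceGroup h))
    (hx : ∀ k : Fin h,
      mk (relPrefix h k * (freeX k * freeY k * (freeX k)⁻¹) * (relPrefix h k)⁻¹) ∈ S)
    (hy : ∀ k : Fin h, mk (relPrefix h (k + 1) * (relPrefix h k * freeX k)⁻¹) ∈ S) :
    S = ⊤ := by
  have hgen (k : Fin h) (hP : mk (relPrefix h k) ∈ S) : mk (freeX k) ∈ S ∧ mk (freeY k) ∈ S := by
    have hm := hx k
    have hn := hy k
    rw [relPrefix_succ] at hn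
    simp only [map_mul, map_inv, commutatorElement_def] at hm hn
    set P := mk (relPrefix h k)
    set x := mk (freeX k)
    set y := mk (freeY k)
    have hconj (g : SurfaceGroup h) (hg : P * g * P⁻¹ ∈ S) : g ∈ S := by
      convert S.mul_mem (S.mul_mem (S.inv_mem hP) hg) hP using 1; group
    replace hm := hconj _ hm
    replace hn : x * y * x⁻¹ * y⁻¹ * x⁻¹ ∈ S := hconj _ (by convert hn using 1; group)
    have hxy : x * y ∈ S := by convert S.mul_mem (S.inv_mem hn) hm using 1; group
    have hy : y ∈ S := by convert S.mul_mem (S.mul_mem (S.inv_mem hxy) hm) hxy using 1; group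
    exact ⟨by convert S.mul_mem hxy (S.inv_mem hy) using 1; group, hy⟩
  have hprefix (n : ℕ) (hn : n ≤ h) : mk (relPrefix h n) ∈ S := by
    induction n with
    | zero => simp [relPrefix_zero]
    | succ n ih =>
      have hP := ih (by omega)
      obtain ⟨hxn, hyn⟩ := hgen ⟨n, by omega⟩ hP
      rw [show n + 1 = ((⟨n, by omega⟩ : Fin h) : ℕ) + 1 from rfl, relPrefix_succ, map_mul,
        map_commutatorElement, commutatorElement_def]
      exact S.mul_mem hP (S.mul_mem (S.mul_mem (S.mul_mem hxn hyn) (S.inv_mem hxn)) (S.inv_mem hyn))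
  rw [eq_top_iff, ← PresentedGroup.closure_range_of, closure_le]
  rintro _ ⟨k | k, rfl⟩
  · exact (hgen k (hprefix k k.is_lt.le)).1
  · exact (hgen k (hprefix k k.is_lt.le)).2

theorem fox_surfaceRel {Q X M : Type*} [Group Q] [MulAction Q X] [CommGroup M]
    {q : FreeGroup (Fin h ⊕ Fin h) →* Q} (k : Fin h) (c : Fin h ⊕ Fin h → X → M)
    (hc : ∀ i ≠ k, c (.inl i) = 1 ∧ c (.inr i) = 1) (x : X) :
    fox q c (surfaceRel h) x = fox q c ⁅freeX k, freeY k⁆ ((q (relPrefix h k))⁻¹ • x) := by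
  rw [surfaceRel, fox_list_prod, Finset.prod_eq_single ⟨k, by simp⟩]
  · simp [relPrefix]
  · rintro ⟨i, hi⟩ - hik
    have hi' : (⟨i, by simpa using hi⟩ : Fin h) ≠ k := fun e => hik (by simp [← e])
    simp [commutatorElement_def, fox_mul, fox_inv, (hc _ hi').1, (hc _ hi').2]
  · simp

variable {X M : Type*} [MulAction (SurfaceGroup h) X] [CommGroup M]

theorem fixingSubgroupModulo_range_foxHom_surfaceRel :
    fixingSubgroupModulo (SurfaceGroup h)
      (foxHom mk (surfaceRel h) : (Fin h ⊕ Fin h → X → M) →* _).range = ⊤ := by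
  -- The test cochains supported on `x_k` and `y_k` realise the Fox derivatives
  -- `∂R/∂x_k = P_k (1 - x_k y_k x_k⁻¹)` and `∂R/∂y_k = P_k x_k - P_{k+1}`, `P_k = relPrefix h k`.
  apply eq_top_of_conj_mem
  · intro k v
    refine ⟨Pi.mulSingle (Sum.inl k) fun z => (v (mk (relPrefix h k) • z))⁻¹, ?_⟩
    ext x
    rw [foxHom, MonoidHom.mk'_apply, fox_surfaceRel k _ fun i hi => by simp [hi]]
    simp [commutatorElement_def, fox_mul, fox_inv, smul_smul, mul_assoc, div_eq_inv_mul]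
  · intro k v
    refine ⟨Pi.mulSingle (Sum.inr k) fun z => (v (mk (relPrefix h k * freeX k) • z))⁻¹, ?_⟩
    ext x
    rw [foxHom, MonoidHom.mk'_apply, fox_surfaceRel k _ fun i hi => by simp [hi]]
    simp [commutatorElement_def, fox_mul, fox_inv, smul_smul, mul_assoc, div_eq_inv_mul,
      relPrefix_succ]

theorem exists_fox_surfaceRel_eq_const [Finite X] [IsPretransitive (SurfaceGroup h) X] {a : M}
    (ha : a ^ Nat.card X = 1) : ∃ c : Fin h ⊕ Fin h → X → M, fox mk c (surfaceRel h) = fun _ => a :=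
  const_mem_of_fixingSubgroupModulo_eq_top fixingSubgroupModulo_range_foxHom_surfaceRel ha

end SurfaceGroup

section Splitting

variable {Q X G : Type*} [Group Q] [MulAction Q X] [Group G]

def evalAtFixedPoint (ρ : Q →* (X → G) ⋊[mulAutArrow] Q) (hρ : ∀ d, (ρ d).right = d) {x₀ : X}
    {H : Subgroup Q} (hH : H ≤ stabilizer Q x₀) : H →* G where
  toFun d := (ρ d).left x₀
  map_one' := by simp
  map_mul' d₁ d₂ := by
    rw [Subgroup.coe_mul, map_mul, SemidirectProduct.mul_left]
    show (ρ d₁).left x₀ * (ρ d₂).left ((ρ d₁).right⁻¹ • x₀) = _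
    rw [hρ, inv_smul_eq_iff.mpr (hH d₁.2).symm]

theorem mul_inv_section_mem_ker (π : G →* Q) {H : Subgroup Q} (s : H →* G)
    (hs : ∀ d, π (s d) = d) (g : H.comap π) : (g : G) * (s (π.subgroupComap H g))⁻¹ ∈ π.ker :=
  π.mem_ker.mpr (by rw [map_mul, map_inv, hs, mul_inv_eq_one]; rfl)

def comapMulEquivKerProd (π : G →* Q) (hcentral : π.ker ≤ center G) {H : Subgroup Q} (s : H →* G)
    (hs : ∀ d, π (s d) = d) : H.comap π ≃* π.ker × H where
  toFun g := (⟨_, mul_inv_section_mem_ker π s hs g⟩, π.subgroupComap H g)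
  invFun zd := ⟨zd.1 * s zd.2, by simp [hs, MonoidHom.mem_ker.mp zd.1.2]⟩
  left_inv g := by ext; simp
  right_inv := by
    rintro ⟨z, d⟩
    have : π.subgroupComap H ⟨z * s d, by simp [hs, MonoidHom.mem_ker.mp z.2]⟩ = d :=
      Subtype.ext (show π (z * s d) = d by simp [hs, MonoidHom.mem_ker.mp z.2])
    ext <;> simp [this]
  map_mul' g₁ g₂ := by
    ext
    · have hz := mem_center_iff.mp (hcentral (mul_inv_section_mem_ker π s hs g₂))
      simp only [Prod.fst_mul, Subgroup.coe_mul, map_mul, mul_inv_rev]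
      rw [mul_assoc, mul_assoc, ← mul_assoc (g₂ : G), ← hz]
    · simp

end Splitting

theorem FreeGroup.exists_lift_of_surjective {α G Q : Type*} [Group G] [Group Q] {π : G →* Q}
    (hπ : Function.Surjective π) (f : FreeGroup α →* Q) :
    ∃ ℓ : FreeGroup α →* G, ∀ w, π (ℓ w) = f w := by
  let ℓ : FreeGroup α →* G := FreeGroup.lift fun a => Function.surjInv hπ (f (.of a))
  have : π.comp ℓ = f := FreeGroup.ext_hom _ _ fun a => by simp [ℓ, Function.surjInv_eq]
  exact ⟨ℓ, DFunLike.congr_fun this⟩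

theorem exists_splitting_of_fox_eq {α X G : Type*} [Group G] {r : FreeGroup α}
    [MulAction (PresentedGroup {r}) X] (π : G →* PresentedGroup {r}) (hcentral : π.ker ≤ center G)
    (ℓ : FreeGroup α →* G) (hℓ : ∀ w, π (ℓ w) = PresentedGroup.mk _ w) (c : α → X → π.ker)
    (hc : ∀ x, ((fox (PresentedGroup.mk {r}) c r x : π.ker) : G) = ℓ r)
    {H : Subgroup (PresentedGroup {r})} {x₀ : X} (hH : H ≤ stabilizer _ x₀) :
    ∃ s : H →* G, ∀ d, π (s d) = d := by
  -- Multiplicative because `fox c` is a crossed homomorphism with central values.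
  let σ : FreeGroup α →* (X → G) ⋊[mulAutArrow] PresentedGroup {r} :=
    { toFun w := ⟨fun x => ℓ w * ((fox (PresentedGroup.mk {r}) c w x : π.ker) : G)⁻¹,
        PresentedGroup.mk _ w⟩
      map_one' := by ext <;> simp
      map_mul' w₁ w₂ := by
        ext x
        · have hz := (center G).inv_mem (hcentral (fox (PresentedGroup.mk {r}) c w₁ x).2)
          show ℓ (w₁ * w₂) * _ = ℓ w₁ * _ *
            (ℓ w₂ * ((fox (PresentedGroup.mk {r}) c w₂ ((PresentedGroup.mk {r} w₁)⁻¹ • x) :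
              π.ker) : G)⁻¹)
          simp only [fox_mul, map_mul, Subgroup.coe_mul, mul_inv_rev, mul_assoc,
            ← mem_center_iff.mp hz]
        · simp }
  have hσ : normalClosure {r} ≤ σ.ker :=
    normalClosure_le_normal (by simp [σ, hc, PresentedGroup.one_of_mem, ← Pi.one_def])
  let ρ : PresentedGroup {r} →* (X → G) ⋊[mulAutArrow] PresentedGroup {r} :=
    QuotientGroup.lift _ σ hσ
  have hρ (w) : ρ (PresentedGroup.mk _ w) = σ w := rfl
  have hright (d) : (ρ d).right = d := by
    induction d using PresentedGroup.induction_on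
    rfl
  refine ⟨evalAtFixedPoint ρ hright hH, fun d => ?_⟩
  obtain ⟨w, hw⟩ := PresentedGroup.mk_surjective _ (d : PresentedGroup {r})
  show π ((ρ d).left x₀) = d
  rw [← hw, hρ]
  simp [σ, hℓ, MonoidHom.mem_ker.mp (fox (PresentedGroup.mk {r}) c w x₀).2]

theorem central_extension_splits_over_index_p_subgroup_general (p : ℕ) (hp : p.Prime)
    (h : ℕ) (Δ' : Subgroup (SurfaceGroup h)) (hΔ' : Δ'.index = p)
    (G : Type) [Group G] (Z : Subgroup G) (hZcentral : Z ≤ Subgroup.center G)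
    (hZcard : Nat.card Z = p)
    (π : G →* SurfaceGroup h) (hπ : Function.Surjective π) (hker : π.ker = Z) :
    (∃ s : Δ' →* G, ∀ x : Δ', π (s x) = (x : SurfaceGroup h)) ∧
      Nonempty (↥(Δ'.comap π) ≃* (↥Z × ↥Δ')) := by
  subst hker
  let _ : CommGroup π.ker := { mul_comm a b := Subtype.ext (mem_center_iff.mp (hZcentral b.2) a) }
  have : Finite (SurfaceGroup h ⧸ Δ') :=
    Nat.finite_of_card_ne_zero (show Δ'.index ≠ 0 from hΔ' ▸ hp.ne_zero)
  obtain ⟨ℓ, hℓ⟩ := FreeGroup.exists_lift_of_surjective hπ SurfaceGroup.mk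
  let z : π.ker := ⟨ℓ (surfaceRel h), by simp [hℓ, PresentedGroup.one_of_mem]⟩
  have hz : z ^ Nat.card (SurfaceGroup h ⧸ Δ') = 1 := by
    rw [show Nat.card (SurfaceGroup h ⧸ Δ') = Δ'.index from rfl, hΔ', ← hZcard]
    exact pow_card_eq_one'
  obtain ⟨c, hc⟩ := SurfaceGroup.exists_fox_surfaceRel_eq_const (h := h) hz
  obtain ⟨s, hs⟩ := exists_splitting_of_fox_eq π hZcentral ℓ hℓ c (fun x => by rw [hc])
    (stabilizer_quotient Δ').ge
  exact ⟨⟨s, hs⟩, ⟨comapMulEquivKerProd π hZcentral s hs⟩⟩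

/-- Let `p` be prime, `Δ` the surface group of genus `h ≥ 1`, and `Δ'` a subgroup of
index `p`. Any central extension `1 → Z → G → Δ → 1` with `Z` cyclic of order `p`
splits over `Δ'`, and the preimage of `Δ'` is isomorphic to `Z × Δ'`. -/
theorem central_extension_splits_over_index_p_subgroup (p : ℕ) (hp : p.Prime)
    (h : ℕ) (hh : 1 ≤ h) (Δ' : Subgroup (SurfaceGroup h)) (hΔ' : Δ'.index = p)
    (G : Type) [Group G] (Z : Subgroup G) (hZcentral : Z ≤ Subgroup.center G)
    (hZcyc : IsCyclic Z) (hZcard : Nat.card Z = p)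
    (π : G →* SurfaceGroup h) (hπ : Function.Surjective π) (hker : π.ker = Z) :
    (∃ s : Δ' →* G, ∀ x : Δ', π (s x) = (x : SurfaceGroup h)) ∧
      Nonempty (↥(Δ'.comap π) ≃* (↥Z × ↥Δ')) :=
  central_extension_splits_over_index_p_subgroup_general p hp h Δ' hΔ' G Z hZcentral hZcard π hπ
    hker
end

section
/- For every integer g ≥ 1, the direct product Γ_g × ℤ² of a genus-g surface group with ℤ² satisfies def(Γ_g × ℤ²) = −2g. -/
open scoped commutatorElement

/-!
The product of the presentations `⟨x, y | ∏ [xᵢ, yᵢ]⟩` of `Γ_g` and `⟨t |⟩` of `ℤ` (generators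
and relators of both factors, plus the commutators of generators from different factors) presents
`Γ_g × ℤ²` with `|α| = 2g + 2` generators and `|ι| = 4g + 2` relators, so `def ≥ -2g`.

Each of these relators is a product of commutators of generators, and there are classes
`A_j, B_j ∈ H¹(Γ; ℚ)` such that `A_j ∪ B_j` evaluates to `δ_jk` on the `k`-th relator. Given any
presentation `F(σ)/⟨⟨r⟩⟩ ≅ Γ` with relators indexed by `τ`, map `F(σ)` to `ℚ^σ × Heis(ℚ^ι)` by
exponent sums and by the Heisenberg lift of `(A, B)`. The normal closure of `r` lands in the
centre, where this map is additive, so its image spans a space `S` with `dim S ≤ |τ|`. The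
projection of `S` to `ℚ^σ` contains the exponent sums of all relators, so its codimension is at
most `b₁(Γ) ≤ |α|`; and a lift of the `k`-th relator of the first presentation is sent to the
`k`-th basis vector of the central `ℚ^ι`, so `S ⊇ 0 × ℚ^ι`. Hence `|τ| ≥ dim S ≥ |σ| - |α| + |ι|`.
-/

open Subgroup Module Multiplicative

namespace Subgroup

variable {G : Type*} [Group G]

theorem mem_span_image_of_mem_closure {𝕜 M : Type*} [Ring 𝕜] [AddCommGroup M] [Module 𝕜 M]
    {Z : Subgroup G} {Λ : G → M} (hΛ : ∀ x ∈ Z, ∀ y ∈ Z, Λ (x * y) = Λ x + Λ y) {T : Set G}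
    (hT : T ⊆ Z) {x : G} (hx : x ∈ closure T) : Λ x ∈ Submodule.span 𝕜 (Λ '' T) := by
  have hTZ : closure T ≤ Z := (closure_le Z).2 hT
  have hone : Λ 1 = 0 := by simpa using hΛ 1 Z.one_mem 1 Z.one_mem
  induction hx using closure_induction with
  | mem y hy => exact Submodule.subset_span (Set.mem_image_of_mem Λ hy)
  | one => rw [hone]; exact zero_mem _
  | mul y z hy hz ihy ihz => rw [hΛ y (hTZ hy) z (hTZ hz)]; exact add_mem ihy ihz
  | inv y hy ih =>
    have hinv : Λ y⁻¹ + Λ y = 0 := by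
      rw [← hΛ _ (inv_mem (hTZ hy)) _ (hTZ hy), inv_mul_cancel, hone]
    rw [eq_neg_of_add_eq_zero_left hinv]
    exact neg_mem ih

theorem map_normalClosure_le_closure_image {H : Type*} [Group H] (f : G →* H) {s : Set G}
    (hs : f '' s ⊆ center H) : (normalClosure s).map f ≤ closure (f '' s) := by
  have hcenter : closure (f '' s) ≤ center H := (closure_le _).2 hs
  have : (closure (f '' s)).Normal :=
    ⟨fun n hn g => by rwa [mem_center_iff.1 (hcenter hn) g, mul_inv_cancel_right]⟩
  exact map_le_iff_le_comap.2 <|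
    normalClosure_le_normal fun x hx => subset_closure (Set.mem_image_of_mem f hx)

end Subgroup

theorem MonoidHom.map_freeGroupLift {α G H : Type*} [Group G] [Group H] (f : G →* H) (ℓ : α → G)
    (x : FreeGroup α) : f (FreeGroup.lift ℓ x) = FreeGroup.lift (f ∘ ℓ) x :=
  FreeGroup.lift_unique (f.comp (FreeGroup.lift ℓ)) fun _ => by simp

theorem Submodule.finrank_eq_finrank_map_fst_add {𝕜 V W ι : Type*} [Field 𝕜] [AddCommGroup V]
    [Module 𝕜 V] [AddCommGroup W] [Module 𝕜 W] [FiniteDimensional 𝕜 V] [FiniteDimensional 𝕜 W]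
    {S : Submodule 𝕜 (V × W)} (b : Basis ι 𝕜 W) (hS : ∀ i, ((0 : V), b i) ∈ S) :
    finrank 𝕜 S = finrank 𝕜 (S.map (LinearMap.fst 𝕜 V W)) + finrank 𝕜 W := by
  set f := (LinearMap.fst 𝕜 V W).domRestrict S
  have hker : LinearMap.ker (LinearMap.fst 𝕜 V W) ≤ S := by
    rw [LinearMap.ker_fst, LinearMap.range_eq_map, ← b.span_eq, Submodule.map_span,
      Submodule.span_le]
    rintro _ ⟨_, ⟨i, rfl⟩, rfl⟩
    exact hS i
  have hkerf : finrank 𝕜 (LinearMap.ker f) = finrank 𝕜 W := by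
    rw [LinearMap.ker_domRestrict, LinearEquiv.finrank_eq (Submodule.comapSubtypeEquivOfLe hker),
      LinearMap.ker_fst, LinearMap.finrank_range_of_inj LinearMap.inr_injective]
  rw [← f.finrank_range_add_finrank_ker, LinearMap.range_domRestrict, hkerf]

theorem MonoidHom.commute_of_closure_eq_top {G₁ G₂ H : Type*} [Group G₁] [Group G₂] [Group H]
    (f : G₁ →* H) (g : G₂ →* H) {s₁ : Set G₁} {s₂ : Set G₂} (h₁ : closure s₁ = ⊤)
    (h₂ : closure s₂ = ⊤) (h : ∀ x ∈ s₁, ∀ y ∈ s₂, Commute (f x) (g y)) (x : G₁) (y : G₂) :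
    Commute (f x) (g y) := by
  have hle : closure (f '' s₁) ≤ centralizer (closure (g '' s₂)) := by
    rw [centralizer_closure, closure_le]
    rintro _ ⟨x, hx, rfl⟩
    exact mem_centralizer_iff.2 fun _ ⟨y, hy, hxy⟩ => hxy ▸ (h x hx y hy).symm.eq
  have hx : f x ∈ closure (f '' s₁) := by
    rw [← map_closure, h₁]; exact mem_map_of_mem f (mem_top x)
  have hy : g y ∈ closure (g '' s₂) := by
    rw [← map_closure, h₂]; exact mem_map_of_mem g (mem_top y)
  exact (mem_centralizer_iff.1 (hle hx) _ hy).symm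

@[ext]
structure Heisenberg_s6 (R : Type*) where
  p : R
  q : R
  r : R

namespace Heisenberg_s6

variable {R : Type*} [CommRing R]

instance : Mul (Heisenberg_s6 R) := ⟨fun a b => ⟨a.p + b.p, a.q + b.q, a.r + b.r + a.p * b.q⟩⟩
instance : One (Heisenberg_s6 R) := ⟨⟨0, 0, 0⟩⟩
instance : Inv (Heisenberg_s6 R) := ⟨fun a => ⟨-a.p, -a.q, -a.r + a.p * a.q⟩⟩

@[simp] lemma mul_p (a b : Heisenberg_s6 R) : (a * b).p = a.p + b.p := rfl
@[simp] lemma mul_q (a b : Heisenberg_s6 R) : (a * b).q = a.q + b.q := rfl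
@[simp] lemma mul_r (a b : Heisenberg_s6 R) : (a * b).r = a.r + b.r + a.p * b.q := rfl
@[simp] lemma one_p : (1 : Heisenberg_s6 R).p = 0 := rfl
@[simp] lemma one_q : (1 : Heisenberg_s6 R).q = 0 := rfl
@[simp] lemma one_r : (1 : Heisenberg_s6 R).r = 0 := rfl
@[simp] lemma inv_p (a : Heisenberg_s6 R) : a⁻¹.p = -a.p := rfl
@[simp] lemma inv_q (a : Heisenberg_s6 R) : a⁻¹.q = -a.q := rfl
@[simp] lemma inv_r (a : Heisenberg_s6 R) : a⁻¹.r = -a.r + a.p * a.q := rfl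

instance : Group (Heisenberg_s6 R) where
  mul_assoc a b c := by ext <;> simp <;> ring
  one_mul a := by ext <;> simp
  mul_one a := by ext <;> simp
  inv_mul_cancel a := by ext <;> simp

def pHom : Heisenberg_s6 R →* Multiplicative R where
  toFun a := ofAdd a.p
  map_one' := rfl
  map_mul' _ _ := rfl

def qHom : Heisenberg_s6 R →* Multiplicative R where
  toFun a := ofAdd a.q
  map_one' := rfl
  map_mul' _ _ := rfl

def ofCenter : Multiplicative R →* Heisenberg_s6 R where
  toFun c := ⟨0, 0, toAdd c⟩
  map_one' := rfl
  map_mul' _ _ := by ext <;> simp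

@[simp] lemma pHom_apply (a : Heisenberg_s6 R) : pHom a = ofAdd a.p := rfl
@[simp] lemma qHom_apply (a : Heisenberg_s6 R) : qHom a = ofAdd a.q := rfl
@[simp] lemma mem_ker_pHom {a : Heisenberg_s6 R} : a ∈ pHom.ker ↔ a.p = 0 := ofAdd_eq_one
@[simp] lemma mem_ker_qHom {a : Heisenberg_s6 R} : a ∈ qHom.ker ↔ a.q = 0 := ofAdd_eq_one
@[simp] lemma ofCenter_r (c : Multiplicative R) : (ofCenter c).r = toAdd c := rfl

lemma commutatorElement_eq (a b : Heisenberg_s6 R) :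
    ⁅a, b⁆ = ofCenter (ofAdd (a.p * b.q - b.p * a.q)) := by
  ext <;> simp [commutatorElement_def, ofCenter]; ring

lemma list_prod_map_commutatorElement (l : List (Heisenberg_s6 R × Heisenberg_s6 R)) :
    (l.map fun h => ⁅h.1, h.2⁆).prod =
      ofCenter (ofAdd (l.map fun h => h.1.p * h.2.q - h.2.p * h.1.q).sum) := by
  induction l with
  | nil => rfl
  | cons h l ih =>
    rw [List.map_cons, List.prod_cons, ih, commutatorElement_eq, ← map_mul, List.map_cons,
      List.sum_cons, ofAdd_add]

lemma ker_inf_ker_le_center : pHom.ker ⊓ qHom.ker ≤ center (Heisenberg_s6 R) := by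
  intro a ha
  obtain ⟨ha, hb⟩ := Subgroup.mem_inf.1 ha
  rw [mem_ker_pHom] at ha
  rw [mem_ker_qHom] at hb
  exact mem_center_iff.2 fun b => by ext <;> simp [ha, hb, add_comm]

variable {σ : Type*}

def freeGroupLift (A B : FreeGroup σ →* Multiplicative R) : FreeGroup σ →* Heisenberg_s6 R :=
  FreeGroup.lift fun s => ⟨toAdd (A (.of s)), toAdd (B (.of s)), 0⟩

lemma pHom_comp_freeGroupLift (A B : FreeGroup σ →* Multiplicative R) :
    pHom.comp (freeGroupLift A B) = A :=
  FreeGroup.ext_hom _ _ fun _ => by simp [freeGroupLift]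

lemma qHom_comp_freeGroupLift (A B : FreeGroup σ →* Multiplicative R) :
    qHom.comp (freeGroupLift A B) = B :=
  FreeGroup.ext_hom _ _ fun _ => by simp [freeGroupLift]

@[simp] lemma freeGroupLift_p (A B : FreeGroup σ →* Multiplicative R) (x : FreeGroup σ) :
    (freeGroupLift A B x).p = toAdd (A x) :=
  congrArg toAdd (DFunLike.congr_fun (pHom_comp_freeGroupLift A B) x)

@[simp] lemma freeGroupLift_q (A B : FreeGroup σ →* Multiplicative R) (x : FreeGroup σ) :
    (freeGroupLift A B x).q = toAdd (B x) :=
  congrArg toAdd (DFunLike.congr_fun (qHom_comp_freeGroupLift A B) x)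

end Heisenberg_s6

theorem Heisenberg_s6.mem_span_of_mem_normalClosure {𝕜 F V R : Type*} [Ring 𝕜] [Group F]
    [AddCommGroup V] [Module 𝕜 V] [CommRing R] [Module 𝕜 R]
    (Ψ : F →* Multiplicative V × Heisenberg_s6 R) {s : Set F}
    (hs : ∀ y ∈ s, (Ψ y).2.p = 0 ∧ (Ψ y).2.q = 0) {x : F} (hx : x ∈ normalClosure s) :
    (toAdd (Ψ x).1, (Ψ x).2.r) ∈
      Submodule.span 𝕜 ((fun y => (toAdd (Ψ y).1, (Ψ y).2.r)) '' s) := by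
  let Λ : Multiplicative V × Heisenberg_s6 R → V × R := fun h => (toAdd h.1, h.2.r)
  let Z : Subgroup (Multiplicative V × Heisenberg_s6 R) :=
    (⊤ : Subgroup _).prod (pHom.ker ⊓ qHom.ker)
  have hZ : Z ≤ center _ := by
    rw [Subgroup.center_prod, CommGroup.center_eq_top]
    exact prod_mono le_rfl ker_inf_ker_le_center
  have hΛ : ∀ x ∈ Z, ∀ y ∈ Z, Λ (x * y) = Λ x + Λ y := by
    rintro x ⟨-, hx⟩ y -
    simp [Λ, mem_ker_pHom.1 (mem_inf.1 hx).1]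
  have hsZ : Ψ '' s ⊆ Z := by
    rintro _ ⟨y, hy, rfl⟩
    exact ⟨mem_top _, mem_inf.2 (by simpa using hs y hy)⟩
  have := mem_span_image_of_mem_closure (𝕜 := 𝕜) hΛ hsZ
    (map_normalClosure_le_closure_image Ψ (hsZ.trans hZ) (mem_map_of_mem Ψ hx))
  rwa [Set.image_image] at this

section Abelianization

variable (𝕜 : Type*) [Field 𝕜] {σ : Type*} [DecidableEq σ]

def FreeGroup.exponentSums : FreeGroup σ →* Multiplicative (σ → 𝕜) :=
  FreeGroup.lift fun s => ofAdd (Pi.single s 1)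

variable {𝕜}

theorem PresentedGroup.card_le_finrank_add_card [Fintype σ] {τ ι : Type*} [Fintype ι]
    {r : τ → FreeGroup σ} {γ : ι → PresentedGroup (Set.range r)} (hγ : closure (Set.range γ) = ⊤)
    {U : Submodule 𝕜 (σ → 𝕜)} (hU : ∀ j, toAdd (FreeGroup.exponentSums 𝕜 (r j)) ∈ U) :
    Fintype.card σ ≤ finrank 𝕜 U + Fintype.card ι := by
  let π : Multiplicative (σ → 𝕜) →* Multiplicative ((σ → 𝕜) ⧸ U) :=
    AddMonoidHom.toMultiplicative U.mkQ.toAddMonoidHom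
  have hπ : FreeGroup.lift (fun s => π (ofAdd (Pi.single s 1))) =
      π.comp (FreeGroup.exponentSums 𝕜) :=
    FreeGroup.ext_hom _ _ fun s => by simp [FreeGroup.exponentSums]
  let ε : PresentedGroup (Set.range r) →* Multiplicative ((σ → 𝕜) ⧸ U) :=
    PresentedGroup.toGroup (f := fun s => π (ofAdd (Pi.single s 1))) <| by
      rintro _ ⟨j, rfl⟩
      rw [hπ, MonoidHom.comp_apply]
      simpa [π] using hU j
  have hspan : Submodule.span 𝕜 (Set.range fun i => toAdd (ε (γ i))) = ⊤ := by
    rw [eq_top_iff, ← U.range_mkQ, LinearMap.range_eq_map, ← (Pi.basisFun 𝕜 σ).span_eq,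
      Submodule.map_span, Submodule.span_le]
    rintro _ ⟨_, ⟨s, rfl⟩, rfl⟩
    have hs : PresentedGroup.of s ∈ closure (Set.range γ) := hγ ▸ mem_top _
    have := mem_span_image_of_mem_closure (𝕜 := 𝕜) (Λ := fun x => toAdd (ε x))
      (fun x _ y _ => by simp) (Set.subset_univ _) (Z := ⊤) hs
    simpa [ε, π, ← Set.range_comp, Function.comp_def] using this
  have hquot : finrank 𝕜 ((σ → 𝕜) ⧸ U) ≤ Fintype.card ι := by
    have := finrank_range_le_card (R := 𝕜) fun i => toAdd (ε (γ i))
    rwa [Set.finrank, hspan, finrank_top] at this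
  have := U.finrank_quotient_add_finrank
  rw [Module.finrank_fintype_fun_eq_card] at this
  omega

end Abelianization

namespace PresentedGroup

variable {α β : Type*} (rels₁ : Set (FreeGroup α)) (rels₂ : Set (FreeGroup β))

theorem lift_mem_normalClosure {γ σ : Type*} {rels₀ : Set (FreeGroup γ)}
    {rels : Set (FreeGroup σ)} (ψ : PresentedGroup rels₀ →* PresentedGroup rels)
    {ℓ : γ → FreeGroup σ} (hℓ : ∀ u, mk rels (ℓ u) = ψ (.of u)) {w : FreeGroup γ}
    (hw : w ∈ rels₀) : FreeGroup.lift ℓ w ∈ normalClosure rels := by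
  rw [← mk_eq_one_iff, MonoidHom.map_freeGroupLift,
    (funext hℓ : ⇑(mk rels) ∘ ℓ = ψ ∘ of),
    ← FreeGroup.lift_unique (f := ψ ∘ of) (ψ.comp (mk rels₀)) fun _ => rfl,
    MonoidHom.comp_apply, one_of_mem hw, map_one]

def prodRels : Set (FreeGroup (α ⊕ β)) :=
  FreeGroup.map Sum.inl '' rels₁ ∪ FreeGroup.map Sum.inr '' rels₂ ∪
    Set.range fun ab : α × β =>
      ⁅(FreeGroup.of (Sum.inl ab.1) : FreeGroup (α ⊕ β)), FreeGroup.of (Sum.inr ab.2)⁆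

lemma commute_of_inl_of_inr (a : α) (b : β) :
    Commute (of (Sum.inl a) : PresentedGroup (prodRels rels₁ rels₂)) (of (Sum.inr b)) := by
  rw [← commutatorElement_eq_one_iff_commute, of, of, ← map_commutatorElement]
  exact one_of_mem (Or.inr ⟨(a, b), rfl⟩)

def prodEquiv :
    PresentedGroup rels₁ × PresentedGroup rels₂ ≃* PresentedGroup (prodRels rels₁ rels₂) :=
  let inl' := PresentedGroup.map (FreeGroup.map Sum.inl) fun x hx => .inl (.inl ⟨x, hx, rfl⟩)
  let inr' := PresentedGroup.map (FreeGroup.map Sum.inr) fun x hx => .inl (.inr ⟨x, hx, rfl⟩)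
  let f : α ⊕ β → PresentedGroup rels₁ × PresentedGroup rels₂ :=
    Sum.elim (fun a => (of a, 1)) fun b => (1, of b)
  let split :
      PresentedGroup (prodRels rels₁ rels₂) →* PresentedGroup rels₁ × PresentedGroup rels₂ :=
    toGroup (f := f) <| by
      have hinl : (FreeGroup.lift f).comp (FreeGroup.map Sum.inl) =
          (MonoidHom.inl _ _).comp (mk rels₁) := FreeGroup.ext_hom _ _ fun _ => rfl
      have hinr : (FreeGroup.lift f).comp (FreeGroup.map Sum.inr) =
          (MonoidHom.inr _ _).comp (mk rels₂) := FreeGroup.ext_hom _ _ fun _ => rfl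
      rintro _ ((⟨x, hx, rfl⟩ | ⟨x, hx, rfl⟩) | ⟨⟨a, b⟩, rfl⟩)
      · simpa [one_of_mem hx, Prod.mk_one_one] using DFunLike.congr_fun hinl x
      · simpa [one_of_mem hx, Prod.mk_one_one] using DFunLike.congr_fun hinr x
      · rw [map_commutatorElement, commutatorElement_eq_one_iff_commute]
        exact MonoidHom.commute_inl_inr _ _
  MonoidHom.toMulEquiv
    (inl'.noncommCoprod inr' <|
      MonoidHom.commute_of_closure_eq_top _ _ (closure_range_of _) (closure_range_of _) <| by
        rintro _ ⟨a, rfl⟩ _ ⟨b, rfl⟩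
        exact commute_of_inl_of_inr _ _ a b)
    split
    (MonoidHom.ext fun ⟨x, y⟩ => by
      have hl : split.comp inl' = MonoidHom.inl _ _ := ext fun _ => rfl
      have hr : split.comp inr' = MonoidHom.inr _ _ := ext fun _ => rfl
      simp [MonoidHom.noncommCoprod_apply, ← MonoidHom.comp_apply, hl, hr])
    (ext fun z => by cases z <;> simp [split, f, inl', inr'] <;> rfl)

end PresentedGroup

theorem isPresentation_of_mulEquiv {Γ : Type} [Group Γ] {α ι : Type*} [Fintype α] [Fintype ι]
    (r : ι → FreeGroup α) (e : Γ ≃* PresentedGroup (Set.range r)) :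
    IsPresentation Γ (Fintype.card α) (Fintype.card ι) := by
  set eα := Fintype.equivFin α
  refine ⟨fun j => FreeGroup.freeGroupCongr eα (r ((Fintype.equivFin ι).symm j)), ⟨?_⟩⟩
  change Γ ≃* PresentedGroup
    (Set.range ((FreeGroup.freeGroupCongr eα ∘ r) ∘ (Fintype.equivFin ι).symm))
  rw [(Equiv.surjective _).range_comp, Set.range_comp]
  exact e.trans (PresentedGroup.equivPresentedGroup _ eα)

/-- A presentation `⟨α | ∏_{(u, v) ∈ pairs k} [u, v], k ∈ ι⟩` whose relators are products of
commutators of generators, together with classes `left j, right j ∈ H¹(−; 𝕜)` (given by their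
values on the generators) such that the cup product `left j ∪ right j` evaluates to `δ_jk` on the
`2`-cycle of the `k`-th relator. -/
structure CommutatorPresentation (𝕜 α ι : Type*) [Field 𝕜] [DecidableEq ι] where
  pairs : ι → List (α × α)
  left : α → ι → 𝕜
  right : α → ι → 𝕜
  cup_eq : ∀ k, ((pairs k).map fun uv => left uv.1 * right uv.2 - left uv.2 * right uv.1).sum =
    Pi.single k 1

namespace CommutatorPresentation

variable {𝕜 α ι : Type*} [Field 𝕜] [DecidableEq ι] (D : CommutatorPresentation 𝕜 α ι)

def rels (k : ι) : FreeGroup α :=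
  ((D.pairs k).map fun uv => ⁅FreeGroup.of uv.1, FreeGroup.of uv.2⁆).prod

lemma cup_eq_apply (k j : ι) :
    ((D.pairs k).map fun uv =>
        D.left uv.1 j * D.right uv.2 j - D.left uv.2 j * D.right uv.1 j).sum =
      if j = k then 1 else 0 := by
  simpa [Pi.list_sum_apply, Function.comp_def, Pi.single_apply] using congrFun (D.cup_eq k) j

lemma lift_rels_eq_one {M : Type*} [CommGroup M] (f : α → M) (k : ι) :
    FreeGroup.lift f (D.rels k) = 1 := by
  rw [rels, map_list_prod, List.map_map]
  refine List.prod_eq_one fun x hx => ?_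
  obtain ⟨uv, -, rfl⟩ := List.mem_map.1 hx
  simp [map_commutatorElement, commutatorElement_eq_one_iff_mul_comm, mul_comm]

lemma lift_rels_eq_ofCenter (f : α → Heisenberg_s6 (ι → 𝕜)) (hp : ∀ u, (f u).p = D.left u)
    (hq : ∀ u, (f u).q = D.right u) (k : ι) :
    FreeGroup.lift f (D.rels k) = Heisenberg_s6.ofCenter (ofAdd (Pi.single k 1)) := by
  have := Heisenberg_s6.list_prod_map_commutatorElement ((D.pairs k).map fun uv => (f uv.1, f uv.2))
  rw [rels, map_list_prod, List.map_map, ← D.cup_eq k]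
  simpa [Function.comp_def, map_commutatorElement, hp, hq] using this

def abelianLift {M : Type*} [AddCommGroup M] (v : α → M) :
    PresentedGroup (Set.range D.rels) →* Multiplicative M :=
  PresentedGroup.toGroup (f := fun u => ofAdd (v u)) <| by
    rintro _ ⟨k, rfl⟩
    exact D.lift_rels_eq_one _ k

@[simp] lemma abelianLift_of {M : Type*} [AddCommGroup M] (v : α → M) (u : α) :
    D.abelianLift v (.of u) = ofAdd (v u) :=
  PresentedGroup.toGroup.of _

theorem card_add_le [Fintype α] [Fintype ι] {σ τ : Type*} [Fintype σ] [DecidableEq σ]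
    [Fintype τ] (r : τ → FreeGroup σ)
    (ψ : PresentedGroup (Set.range D.rels) ≃* PresentedGroup (Set.range r)) :
    Fintype.card σ + Fintype.card ι ≤ Fintype.card τ + Fintype.card α := by
  set θ : FreeGroup σ →* PresentedGroup (Set.range D.rels) :=
    ψ.symm.toMonoidHom.comp (PresentedGroup.mk _)
  obtain ⟨ℓ, hℓ⟩ : ∃ ℓ : α → FreeGroup σ, ∀ u, PresentedGroup.mk _ (ℓ u) = ψ (.of u) :=
    ⟨fun u => Function.surjInv (PresentedGroup.mk_surjective _) (ψ (.of u)),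
      fun u => Function.surjInv_eq _ _⟩
  set H := Heisenberg_s6.freeGroupLift ((D.abelianLift D.left).comp θ)
    ((D.abelianLift D.right).comp θ)
  set Ψ := (FreeGroup.exponentSums 𝕜).prod H
  set S := Submodule.span 𝕜 (Set.range fun j => (toAdd (Ψ (r j)).1, (Ψ (r j)).2.r))
  have hS : ∀ x ∈ normalClosure (Set.range r), (toAdd (Ψ x).1, (Ψ x).2.r) ∈ S := by
    intro x hx
    have := Heisenberg_s6.mem_span_of_mem_normalClosure (𝕜 := 𝕜) Ψ (by
      rintro _ ⟨j, rfl⟩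
      simp [Ψ, H, θ, PresentedGroup.one_of_mem (Set.mem_range_self j)]) hx
    rwa [← Set.range_comp] at this
  have hker : ∀ k, ((0 : σ → 𝕜), Pi.basisFun 𝕜 ι k) ∈ S := by
    intro k
    have hn := PresentedGroup.lift_mem_normalClosure ψ.toMonoidHom hℓ (Set.mem_range_self k)
    convert hS _ hn using 1
    refine Prod.ext ?_ ?_
    · show _ = toAdd (FreeGroup.exponentSums 𝕜 (FreeGroup.lift ℓ (D.rels k)))
      rw [MonoidHom.map_freeGroupLift, D.lift_rels_eq_one]
      rfl
    · show _ = (H (FreeGroup.lift ℓ (D.rels k))).r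
      rw [H.map_freeGroupLift, D.lift_rels_eq_ofCenter _ (fun u => by simp [H, θ, hℓ])
        (fun u => by simp [H, θ, hℓ])]
      simp
  have hgen : closure (Set.range fun u => ψ (.of u)) = ⊤ := by
    rw [← Function.comp_def, Set.range_comp, ← ψ.coe_toMonoidHom, ← MonoidHom.map_closure,
      PresentedGroup.closure_range_of, map_top_of_surjective _ ψ.surjective]
  have hα := PresentedGroup.card_le_finrank_add_card hgen (U := S.map (LinearMap.fst 𝕜 _ _))
    fun j => ⟨_, Submodule.subset_span ⟨j, rfl⟩, rfl⟩
  have hτ : finrank 𝕜 S ≤ Fintype.card τ := finrank_range_le_card _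
  rw [Submodule.finrank_eq_finrank_map_fst_add _ hker, Module.finrank_fintype_fun_eq_card] at hτ
  omega

def Presents (G : Type) [Group G] : Prop :=
  Nonempty (G ≃* PresentedGroup (Set.range D.rels))

theorem Presents.hasDeficiency [Fintype α] [Fintype ι] {G : Type} [Group G] (h : D.Presents G) :
    HasDeficiency G (Fintype.card α - Fintype.card ι) := by
  obtain ⟨e⟩ := h
  refine ⟨⟨_, _, isPresentation_of_mulEquiv D.rels e, rfl⟩, fun a b ⟨r, ⟨φ⟩⟩ => ?_⟩
  have := D.card_add_le r (e.symm.trans φ)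
  simp only [Fintype.card_fin] at this
  omega

section Product

variable {β κ : Type*} [DecidableEq α] [DecidableEq β] [DecidableEq κ]

-- The cross relator `[a, b]` is detected by the duals of the generators `a` and `b`.
def prod (D₁ : CommutatorPresentation 𝕜 α ι) (D₂ : CommutatorPresentation 𝕜 β κ) :
    CommutatorPresentation 𝕜 (α ⊕ β) (ι ⊕ κ ⊕ α × β) where
  pairs := Sum.elim (fun k => (D₁.pairs k).map (Prod.map Sum.inl Sum.inl)) <|
    Sum.elim (fun k => (D₂.pairs k).map (Prod.map Sum.inr Sum.inr))
      fun ab => [(Sum.inl ab.1, Sum.inr ab.2)]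
  left := Sum.elim
    (fun a => Sum.elim (D₁.left a) (Sum.elim 0 fun ab => if ab.1 = a then 1 else 0))
    fun b => Sum.elim 0 (Sum.elim (D₂.left b) 0)
  right := Sum.elim (fun a => Sum.elim (D₁.right a) 0)
    fun b => Sum.elim 0 (Sum.elim (D₂.right b) fun ab => if ab.2 = b then 1 else 0)
  cup_eq := by
    rintro (k | k | ⟨a, b⟩) <;> funext j <;> rcases j with j | j | ⟨a', b'⟩ <;>
      simp [Pi.list_sum_apply, Function.comp_def, D₁.cup_eq_apply, D₂.cup_eq_apply,
        Pi.single_apply, ← ite_and, and_comm]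

lemma range_rels_prod (D₁ : CommutatorPresentation 𝕜 α ι) (D₂ : CommutatorPresentation 𝕜 β κ) :
    Set.range (D₁.prod D₂).rels =
      PresentedGroup.prodRels (Set.range D₁.rels) (Set.range D₂.rels) := by
  have : (D₁.prod D₂).rels = Sum.elim (FreeGroup.map Sum.inl ∘ D₁.rels)
      (Sum.elim (FreeGroup.map Sum.inr ∘ D₂.rels) fun ab : α × β =>
        ⁅(FreeGroup.of (Sum.inl ab.1) : FreeGroup (α ⊕ β)), FreeGroup.of (Sum.inr ab.2)⁆) := by
    funext k
    rcases k with k | k | ab <;>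
      simp [rels, prod, map_list_prod, map_commutatorElement, Function.comp_def]
  rw [this, Set.Sum.elim_range, Set.Sum.elim_range, Set.range_comp, Set.range_comp,
    PresentedGroup.prodRels, Set.union_assoc]

theorem Presents.prod {D₁ : CommutatorPresentation 𝕜 α ι} {D₂ : CommutatorPresentation 𝕜 β κ}
    {G H : Type} [Group G] [Group H] (h₁ : D₁.Presents G) (h₂ : D₂.Presents H) :
    (D₁.prod D₂).Presents (G × H) := by
  obtain ⟨e₁⟩ := h₁
  obtain ⟨e₂⟩ := h₂
  rw [Presents, range_rels_prod]
  exact ⟨(e₁.prodCongr e₂).trans (PresentedGroup.prodEquiv _ _)⟩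

end Product

section StandardPresentations

variable (𝕜)

def int : CommutatorPresentation 𝕜 Unit Empty where
  pairs := Empty.elim
  left := 0
  right := 0
  cup_eq := fun k => k.elim

theorem presents_int : (int 𝕜).Presents (Multiplicative ℤ) := by
  have : Subgroup.normalClosure (Set.range (int 𝕜).rels) = ⊥ := by
    simp [Set.range_eq_empty]
  exact ⟨FreeGroup.mulEquivIntOfUnique.symm.trans
    (QuotientGroup.quotientBot.symm.trans (QuotientGroup.quotientMulEquivOfEq this.symm))⟩

-- The duals of `x_{i₀}` and `y_{i₀}` have cup product `1` on the surface relator.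
def surface {g : ℕ} (i₀ : Fin g) : CommutatorPresentation 𝕜 (Fin g ⊕ Fin g) Unit where
  pairs _ := List.ofFn fun i => (Sum.inl i, Sum.inr i)
  left u _ := if u = Sum.inl i₀ then 1 else 0
  right u _ := if u = Sum.inr i₀ then 1 else 0
  cup_eq _ := by
    funext
    simp [List.sum_ofFn]

theorem presents_surfaceGroup {g : ℕ} (i₀ : Fin g) : (surface 𝕜 i₀).Presents (SurfaceGroup g) := by
  have : Set.range (surface 𝕜 i₀).rels = {surfaceRel g} := by
    simp [rels, surface, surfaceRel, List.map_ofFn, Function.comp_def]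
  rw [Presents, this]
  exact ⟨MulEquiv.refl _⟩

end StandardPresentations

end CommutatorPresentation

/-- `def(Γ_g × ℤ²) = -2g` for every `g ≥ 1`. -/
theorem deficiency_surfaceGroup_prod_int_pow_two (g : ℕ) (hg : 1 ≤ g) :
    HasDeficiency (SurfaceGroup g × (Multiplicative ℤ × Multiplicative ℤ))
      (-(2 * (g : ℤ))) := by
  open CommutatorPresentation in
  have h := ((presents_surfaceGroup ℚ ⟨0, hg⟩).prod
    ((presents_int ℚ).prod (presents_int ℚ))).hasDeficiency
  convert h using 1
  simp
  ring
end

section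
/- For every prime p, the elementary abelian group (ℤ/p)³ satisfies def((ℤ/p)³) = −3. -/
/-!
The standard presentation, whose relators are the `p`-th powers of the three generators and
their three commutators, has deficiency `-3`.

Conversely, let `φ : F → (ℤ/p)³` present the group with `a` generators and relators
`r₁, …, r_b`, and let `A : V = (ℤ/p²)^a → (ℤ/p)³` be the homomorphism induced by `φ`.
Map `F` to the extension `E` of `V` by the `3 × 3` matrices over `ℤ/p` with cocycle
`(v, w) ↦ A v ⊗ A w`. The elements of `E` over `ker A` are central and multiply additively, so
the image of `ker φ`, the normal closure of the relators, lies in the abelian group `S`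
generated by the images of the `rᵢ`, and the `p`-torsion of `S` has at most `p^b` elements.
This `p`-torsion contains the images `(0, x ∧ y)` of commutators, which form a group of order
`p³`, and it projects onto `p • V`, of order `p^a`, through the images of `p`-th powers (this
is why `V` is taken over `ℤ/p²`). Hence `p^(a+3) ≤ p^b`.
-/

open Function Matrix
open scoped commutatorElement

section Counting

variable {H : Type*} [AddCommGroup H]

theorem card_le_pow_mul_card_range_nsmul [Finite H] {ι : Type*} [Fintype ι] {g : ι → H}
    (hg : AddSubgroup.closure (Set.range g) = ⊤) (p : ℕ) [NeZero p] :
    Nat.card H ≤ p ^ Fintype.card ι * Nat.card (nsmulAddMonoidHom (α := H) p).range := by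
  have hsurj : Surjective fun cz : (ι → ZMod p) × (nsmulAddMonoidHom (α := H) p).range =>
      ∑ i, (cz.1 i).val • g i + (cz.2 : H) := by
    intro h
    obtain ⟨m, rfl⟩ :=
      AddSubgroup.mem_closure_range_iff_of_fintype.mp (hg ▸ AddSubgroup.mem_top h)
    refine ⟨(fun i => (m i : ZMod p),
      ⟨p • ∑ i, (m i / p) • g i, ∑ i, (m i / p) • g i, rfl⟩), ?_⟩
    simp only [Finset.smul_sum, ← Finset.sum_add_distrib]
    refine Finset.sum_congr rfl fun i _ => ?_
    rw [← natCast_zsmul, ZMod.val_intCast, ← natCast_zsmul, smul_smul, ← add_zsmul,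
      Int.emod_add_mul_ediv]
  calc Nat.card H ≤ Nat.card ((ι → ZMod p) × (nsmulAddMonoidHom (α := H) p).range) :=
        Nat.card_le_card_of_surjective _ hsurj
    _ = _ := by simp [Nat.card_prod, Nat.card_fun]

theorem card_ker_nsmul_le [Finite H] {ι : Type*} [Fintype ι] {g : ι → H}
    (hg : AddSubgroup.closure (Set.range g) = ⊤) (p : ℕ) [NeZero p] :
    Nat.card (nsmulAddMonoidHom (α := H) p).ker ≤ p ^ Fintype.card ι := by
  have hcard := (nsmulAddMonoidHom (α := H) p).ker.card_mul_index
  rw [AddSubgroup.index_ker] at hcard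
  have hle := card_le_pow_mul_card_range_nsmul hg p
  rw [← hcard] at hle
  exact Nat.le_of_mul_le_mul_right hle Nat.card_pos

theorem card_ker_nsmul_closure_le [Finite H] {ι : Type*} [Fintype ι] (g : ι → H) (p : ℕ)
    [NeZero p] :
    Nat.card (nsmulAddMonoidHom (α := AddSubgroup.closure (Set.range g)) p).ker ≤
      p ^ Fintype.card ι := by
  let g' : ι → AddSubgroup.closure (Set.range g) :=
    fun i => ⟨g i, AddSubgroup.subset_closure (Set.mem_range_self i)⟩
  have hg' :
      Set.range g' = ((↑) : AddSubgroup.closure (Set.range g) → H) ⁻¹' Set.range g := by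
    ext x
    simp [g', Subtype.ext_iff, eq_comm]
  refine card_ker_nsmul_le (g := g') ?_ p
  rw [hg']
  exact AddSubgroup.closure_closure_coe_preimage

theorem card_mul_card_le_card_of_lifts [Finite H] {V W X Y : Type*} [AddCommGroup V]
    [AddCommGroup W] (π : H →+ V × W) {f : X → V} (hf : Injective f) {g : Y → W}
    (hg : Injective g) (hfπ : ∀ x, ∃ h, (π h).1 = f x)
    (hgπ : ∀ y, ∃ h, π h = (0, g y)) :
    Nat.card X * Nat.card Y ≤ Nat.card H := by
  choose s hs using hfπ
  choose t ht using hgπ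
  rw [← Nat.card_prod]
  refine Nat.card_le_card_of_injective (fun xy => s xy.1 + t xy.2) ?_
  rintro ⟨x, y⟩ ⟨x', y'⟩ h
  have hπ := congrArg π h
  simp only [map_add, ht, Prod.ext_iff, Prod.fst_add, Prod.snd_add, hs, add_zero] at hπ
  obtain rfl := hf hπ.1
  exact Prod.ext rfl (hg (add_left_cancel hπ.2))

end Counting

structure BilinExt {V W : Type*} [AddCommGroup V] [AddCommGroup W] (β : V →+ V →+ W) where
  fst : V
  snd : W

namespace BilinExt

variable {V W : Type*} [AddCommGroup V] [AddCommGroup W] {β : V →+ V →+ W}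

@[ext] theorem ext {x y : BilinExt β} (h₁ : x.fst = y.fst) (h₂ : x.snd = y.snd) : x = y := by
  cases x; cases y; simp_all

instance : Mul (BilinExt β) := ⟨fun x y => ⟨x.fst + y.fst, x.snd + y.snd + β x.fst y.fst⟩⟩
instance : One (BilinExt β) := ⟨⟨0, 0⟩⟩
instance : Inv (BilinExt β) := ⟨fun x => ⟨-x.fst, -x.snd + β x.fst x.fst⟩⟩

@[simp] theorem fst_mul (x y : BilinExt β) : (x * y).fst = x.fst + y.fst := rfl
@[simp] theorem snd_mul (x y : BilinExt β) : (x * y).snd = x.snd + y.snd + β x.fst y.fst := rfl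
@[simp] theorem fst_inv (x : BilinExt β) : x⁻¹.fst = -x.fst := rfl
@[simp] theorem snd_inv (x : BilinExt β) : x⁻¹.snd = -x.snd + β x.fst x.fst := rfl
@[simp] theorem fst_one : (1 : BilinExt β).fst = 0 := rfl
@[simp] theorem snd_one : (1 : BilinExt β).snd = 0 := rfl

instance : Group (BilinExt β) where
  mul_assoc x y z := by ext <;> simp <;> abel
  one_mul x := by ext <;> simp
  mul_one x := by ext <;> simp
  inv_mul_cancel x := by ext <;> simp

def fstHom : BilinExt β →* Multiplicative V where
  toFun x := .ofAdd x.fst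
  map_one' := rfl
  map_mul' _ _ := rfl

@[simp] theorem fst_pow (x : BilinExt β) (k : ℕ) : (x ^ k).fst = k • x.fst :=
  congrArg Multiplicative.toAdd (map_pow fstHom x k)

def toProd (x : BilinExt β) : V × W := (x.fst, x.snd)

theorem commutatorElement_eq (x y : BilinExt β) :
    ⁅x, y⁆ = ⟨0, β x.fst y.fst - β y.fst x.fst⟩ := by
  ext
  · simp [commutatorElement_def]
  · simp [commutatorElement_def]
    abel

theorem commute_of_radical {x : BilinExt β} (hx : ∀ v, β x.fst v = 0 ∧ β v x.fst = 0)
    (y : BilinExt β) : Commute y x := by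
  ext <;> simp [hx, add_comm]

def centralSubgroup (S : AddSubgroup (V × W))
    (hS : ∀ s ∈ S, ∀ v, β s.1 v = 0 ∧ β v s.1 = 0) : Subgroup (BilinExt β) where
  carrier := {x | toProd x ∈ S}
  one_mem' := S.zero_mem
  mul_mem' {x y} hx hy := by
    have hxy : β x.fst y.fst = 0 := (hS _ hx _).1
    have h : toProd (x * y) = toProd x + toProd y := by simp [toProd, hxy]
    simpa [h] using S.add_mem hx hy
  inv_mem' {x} hx := by
    have hxx : β x.fst x.fst = 0 := (hS _ hx _).1
    have h : toProd x⁻¹ = -toProd x := by simp [toProd, hxx]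
    simpa [h] using S.neg_mem hx

instance (S : AddSubgroup (V × W)) (hS : ∀ s ∈ S, ∀ v, β s.1 v = 0 ∧ β v s.1 = 0) :
    (centralSubgroup S hS).Normal where
  conj_mem x hx g := by
    rwa [(commute_of_radical (hS _ hx) g).mul_inv_cancel]

end BilinExt

section Wedge

variable {ι R : Type*} [CommRing R]

def wedge (x y : ι → R) : Matrix ι ι R := vecMulVec x y - vecMulVec y x

def wedgeSpan (ι R : Type*) [CommRing R] : AddSubgroup (Matrix ι ι R) :=
  AddSubgroup.closure (Set.range fun xy : (ι → R) × (ι → R) => wedge xy.1 xy.2)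

theorem wedge_mem_wedgeSpan (x y : ι → R) : wedge x y ∈ wedgeSpan ι R :=
  AddSubgroup.subset_closure ⟨(x, y), rfl⟩

theorem pow_three_le_card_wedgeSpan [Finite R] :
    Nat.card R ^ 3 ≤ Nat.card (wedgeSpan (Fin 3) R) := by
  -- `f c` has the entries `c 0`, `c 1`, `c 2` at the positions `(0,1)`, `(0,2)`, `(1,2)`
  let f : (Fin 3 → R) → wedgeSpan (Fin 3) R := fun c =>
    ⟨wedge (Pi.single 0 1) ![0, c 0, c 1] + wedge (Pi.single 1 1) (Pi.single 2 (c 2)),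
      add_mem (wedge_mem_wedgeSpan _ _) (wedge_mem_wedgeSpan _ _)⟩
  have hf : Injective f := by
    intro c d h
    have h' := congrArg Subtype.val h
    funext i
    fin_cases i
    · simpa [f, wedge, vecMulVec] using congrFun (congrFun h' 0) 1
    · simpa [f, wedge, vecMulVec] using congrFun (congrFun h' 0) 2
    · simpa [f, wedge, vecMulVec] using congrFun (congrFun h' 1) 2
  simpa [Nat.card_fun] using Nat.card_le_card_of_injective f hf

end Wedge

def outerCocycle {V ι R : Type*} [AddCommGroup V] [CommRing R] (A : V →+ (ι → R)) :
    V →+ V →+ Matrix ι ι R :=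
  AddMonoidHom.mk' (fun v => AddMonoidHom.mk' (fun w => vecMulVec (A v) (A w))
    fun w w' => by simp [vecMulVec_add]) fun v v' => by ext; simp [add_vecMulVec]

theorem outerCocycle_apply {V ι R : Type*} [AddCommGroup V] [CommRing R] (A : V →+ (ι → R))
    (v w : V) : outerCocycle A v w = vecMulVec (A v) (A w) := rfl

def castCombination {ι U : Type*} [Fintype ι] [AddCommGroup U] {n m : ℕ} [Module (ZMod n) U]
    (h : n ∣ m) (M : ι → U) : (ι → ZMod m) →+ U where
  toFun v := ∑ i, ZMod.castHom h (ZMod n) (v i) • M i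
  map_zero' := by simp only [Pi.zero_apply, map_zero, zero_smul, Finset.sum_const_zero]
  map_add' v w := by simp only [Pi.add_apply, map_add, add_smul, Finset.sum_add_distrib]

theorem castCombination_single {ι U : Type*} [Fintype ι] [DecidableEq ι] [AddCommGroup U]
    {n m : ℕ} [Module (ZMod n) U] (h : n ∣ m) (M : ι → U) (i : ι) :
    castCombination h M (Pi.single i 1) = M i := by
  simp only [castCombination, AddMonoidHom.coe_mk, ZeroHom.coe_mk, Pi.single_apply, apply_ite,
    map_one, map_zero, ite_smul, one_smul, zero_smul, Finset.sum_ite_eq', Finset.mem_univ, if_true]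

theorem FreeGroup.lift_single_surjective (ι : Type*) [Fintype ι] [DecidableEq ι] (m : ℕ)
    [NeZero m] :
    Surjective (FreeGroup.lift fun i : ι => Multiplicative.ofAdd (Pi.single i (1 : ZMod m))) := by
  rw [← MonoidHom.range_eq_top, FreeGroup.range_lift_eq_closure, eq_top_iff]
  intro v _
  have hsingle : ∀ i (x : ZMod m), Multiplicative.ofAdd (Pi.single i x : ι → ZMod m) =
      Multiplicative.ofAdd (Pi.single i (1 : ZMod m)) ^ x.val := by
    intro i x
    rw [← ofAdd_nsmul, ← Pi.single_smul', nsmul_one, ZMod.natCast_zmod_val]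
  rw [← ofAdd_toAdd v, ← Finset.univ_sum_single (Multiplicative.toAdd v), ofAdd_sum]
  refine Subgroup.prod_mem _ fun i _ => ?_
  rw [hsingle]
  exact pow_mem (Subgroup.subset_closure (Set.mem_range_self i)) _

theorem ZMod.nsmul_natCast_val_injective (p : ℕ) [NeZero p] :
    Injective fun c : ZMod p => p • ((c.val : ℕ) : ZMod (p ^ 2)) := by
  intro c d h
  have hlt : ∀ c : ZMod p, p * c.val < p ^ 2 := fun c => by
    rw [sq]
    exact Nat.mul_lt_mul_of_pos_left c.val_lt (NeZero.pos p)
  simp only [nsmul_eq_mul, ← Nat.cast_mul] at h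
  rw [ZMod.natCast_eq_natCast_iff', Nat.mod_eq_of_lt (hlt c), Nat.mod_eq_of_lt (hlt d)] at h
  exact ZMod.val_injective p (Nat.eq_of_mul_eq_mul_left (NeZero.pos p) h)

def zmodPowHom (p : ℕ) [NeZero p] {G : Type*} [Group G] {x : G} (hx : x ^ p = 1) :
    Multiplicative (ZMod p) →* G where
  toFun c := x ^ c.toAdd.val
  map_one' := by simp
  map_mul' c d := by rw [toAdd_mul, ZMod.val_add, ← pow_eq_pow_mod _ hx, pow_add]

theorem ofAdd_one_pow_val {p : ℕ} [NeZero p] (c : Multiplicative (ZMod p)) :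
    Multiplicative.ofAdd (1 : ZMod p) ^ c.toAdd.val = c := by
  rw [← ofAdd_nsmul, nsmul_one, ZMod.natCast_zmod_val, ofAdd_toAdd]

namespace Deficiency

open BilinExt

section PresentationBound

variable {p n a : ℕ} (φ : FreeGroup (Fin a) →* Multiplicative (Fin n → ZMod p))

def linearPart : (Fin a → ZMod (p ^ 2)) →+ (Fin n → ZMod p) :=
  castCombination (dvd_pow_self p two_ne_zero) fun i => (φ (.of i)).toAdd

def liftExt : FreeGroup (Fin a) →* BilinExt (outerCocycle (linearPart φ)) :=
  FreeGroup.lift fun i => ⟨Pi.single i 1, 0⟩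

theorem fstHom_comp_liftExt :
    fstHom.comp (liftExt φ) = FreeGroup.lift fun i => .ofAdd (Pi.single i (1 : ZMod (p ^ 2))) :=
  FreeGroup.ext_hom _ _ fun _ => rfl

theorem linearPart_liftExt_fst (w : FreeGroup (Fin a)) :
    linearPart φ (liftExt φ w).fst = (φ w).toAdd := by
  have h :
      (AddMonoidHom.toMultiplicative (linearPart φ)).comp (fstHom.comp (liftExt φ)) = φ := by
    refine FreeGroup.ext_hom _ _ fun i => ?_
    rw [fstHom_comp_liftExt]
    simp [linearPart, castCombination_single]
  exact congrArg Multiplicative.toAdd (DFunLike.congr_fun h w)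

theorem liftExt_fst_surjective [NeZero p] : Surjective fun w => (liftExt φ w).fst := by
  have h := FreeGroup.lift_single_surjective (Fin a) (p ^ 2)
  rw [← fstHom_comp_liftExt φ] at h
  exact Multiplicative.toAdd.surjective.comp h

theorem toProd_liftExt_commutatorElement (f g : FreeGroup (Fin a)) :
    toProd (liftExt φ ⁅f, g⁆) = (0, wedge (φ f).toAdd (φ g).toAdd) := by
  simp [toProd, commutatorElement_eq, outerCocycle_apply, linearPart_liftExt_fst, wedge]

variable {b : ℕ} (r : Fin b → FreeGroup (Fin a))

def relatorSpan : AddSubgroup ((Fin a → ZMod (p ^ 2)) × Matrix (Fin n) (Fin n) (ZMod p)) :=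
  AddSubgroup.closure (Set.range fun i => toProd (liftExt φ (r i)))

variable {φ r}

theorem toProd_liftExt_mem_relatorSpan (hker : φ.ker = Subgroup.normalClosure (Set.range r))
    {w : FreeGroup (Fin a)} (hw : w ∈ φ.ker) : toProd (liftExt φ w) ∈ relatorSpan φ r := by
  have hS : ∀ s ∈ relatorSpan φ r, linearPart φ s.1 = 0 := by
    intro s hs
    refine (AddSubgroup.closure_le ((linearPart φ).ker.comap (AddMonoidHom.fst _ _))).mpr ?_ hs
    rintro _ ⟨i, rfl⟩
    have hi : r i ∈ φ.ker := hker ▸ Subgroup.subset_normalClosure ⟨i, rfl⟩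
    simpa [toProd, linearPart_liftExt_fst] using hi
  have hrad : ∀ s ∈ relatorSpan φ r, ∀ v, outerCocycle (linearPart φ) s.1 v = 0 ∧
      outerCocycle (linearPart φ) v s.1 = 0 := by
    intro s hs v
    simp [outerCocycle_apply, hS s hs]
  have hle : φ.ker ≤ (centralSubgroup _ hrad).comap (liftExt φ) := by
    rw [hker]
    refine Subgroup.normalClosure_le_normal ?_
    rintro _ ⟨i, rfl⟩
    exact AddSubgroup.subset_closure ⟨i, rfl⟩
  exact hle hw

theorem exists_mem_relatorSpan_fst_eq_nsmul [NeZero p]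
    (hker : φ.ker = Subgroup.normalClosure (Set.range r)) (v : Fin a → ZMod (p ^ 2)) :
    ∃ s ∈ relatorSpan φ r, s.1 = p • v := by
  obtain ⟨w, hw⟩ := liftExt_fst_surjective φ v
  have hwp : w ^ p ∈ φ.ker := by
    rw [MonoidHom.mem_ker, map_pow]
    exact congrArg Multiplicative.ofAdd (ZModModule.char_nsmul_eq_zero p (φ w).toAdd)
  refine ⟨_, toProd_liftExt_mem_relatorSpan hker hwp, ?_⟩
  simp only [toProd, map_pow, fst_pow]
  exact congrArg (p • ·) hw

theorem wedgeSpan_le_comap_inr_relatorSpan (hφ : Surjective φ)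
    (hker : φ.ker = Subgroup.normalClosure (Set.range r)) :
    wedgeSpan (Fin n) (ZMod p) ≤ (relatorSpan φ r).comap (AddMonoidHom.inr _ _) := by
  refine (AddSubgroup.closure_le _).mpr ?_
  rintro _ ⟨⟨x, y⟩, rfl⟩
  obtain ⟨f, rfl⟩ := hφ (.ofAdd x)
  obtain ⟨g, rfl⟩ := hφ (.ofAdd y)
  have hfg : ⁅f, g⁆ ∈ φ.ker := by
    rw [MonoidHom.mem_ker, map_commutatorElement, commutatorElement_eq_one_iff_mul_comm, mul_comm]
  have h := toProd_liftExt_mem_relatorSpan hker hfg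
  rwa [toProd_liftExt_commutatorElement] at h

theorem pow_mul_card_wedgeSpan_le [NeZero p] (hφ : Surjective φ)
    (hker : φ.ker = Subgroup.normalClosure (Set.range r)) :
    p ^ a * Nat.card (wedgeSpan (Fin n) (ZMod p)) ≤ p ^ b := by
  set S := relatorSpan φ r
  set K := (nsmulAddMonoidHom (α := S) p).ker
  have hK : ∀ s ∈ S, p • s.1 = 0 → ∃ k : K, (S.subtype.comp K.subtype) k = s := by
    intro s hs hps
    have hp : p • s = 0 := Prod.ext hps (ZModModule.char_nsmul_eq_zero p s.2)
    exact ⟨⟨⟨s, hs⟩, Subtype.ext hp⟩, rfl⟩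
  have hlower :
      Nat.card (Fin a → ZMod p) * Nat.card (wedgeSpan (Fin n) (ZMod p)) ≤ Nat.card K := by
    refine card_mul_card_le_card_of_lifts (S.subtype.comp K.subtype)
      (f := fun c i => p • (((c i).val : ℕ) : ZMod (p ^ 2)))
      (fun c d h => funext fun i => ZMod.nsmul_natCast_val_injective p (congrFun h i))
      Subtype.val_injective (fun c => ?_)
      fun q => hK _ (wedgeSpan_le_comap_inr_relatorSpan hφ hker q.2) (smul_zero p)
    obtain ⟨s, hs, hsv⟩ :=
      exists_mem_relatorSpan_fst_eq_nsmul hker fun i => (((c i).val : ℕ) : ZMod (p ^ 2))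
    obtain ⟨k, hk⟩ := hK s hs (by
      rw [hsv, smul_smul, ← sq]
      exact ZModModule.char_nsmul_eq_zero _ _)
    exact ⟨k, by rw [hk, hsv]; rfl⟩
  calc p ^ a * Nat.card (wedgeSpan (Fin n) (ZMod p))
      = Nat.card (Fin a → ZMod p) * Nat.card (wedgeSpan (Fin n) (ZMod p)) := by simp
    _ ≤ Nat.card K := hlower
    _ ≤ p ^ b := (card_ker_nsmul_closure_le _ p).trans_eq (by rw [Fintype.card_fin])

end PresentationBound

section StandardPresentation

variable (p : ℕ)

abbrev ZModCube := Multiplicative (ZMod p) × Multiplicative (ZMod p) × Multiplicative (ZMod p)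

def standardRelators : Fin 6 → FreeGroup (Fin 3) :=
  let x : Fin 3 → FreeGroup (Fin 3) := FreeGroup.of
  ![x 0 ^ p, x 1 ^ p, x 2 ^ p, ⁅x 0, x 1⁆, ⁅x 0, x 2⁆, ⁅x 1, x 2⁆]

def cubeGen : Fin 3 → ZModCube p := ![(.ofAdd 1, 1, 1), (1, .ofAdd 1, 1), (1, 1, .ofAdd 1)]

theorem lift_cubeGen_standardRelators :
    ∀ r ∈ Set.range (standardRelators p), FreeGroup.lift (cubeGen p) r = 1 := by
  rintro _ ⟨j, rfl⟩
  fin_cases j <;> simp [standardRelators, cubeGen, map_commutatorElement,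
    commutatorElement_eq_one_iff_mul_comm, mul_comm, ← ofAdd_nsmul]

theorem of_pow_eq_one (i : Fin 3) :
    (PresentedGroup.of (rels := Set.range (standardRelators p)) i) ^ p = 1 := by
  rw [PresentedGroup.of, ← map_pow]
  refine PresentedGroup.one_of_mem ?_
  fin_cases i <;> simp [standardRelators, Matrix.range_cons]

theorem commute_of_lt {i j : Fin 3} (hij : i < j) :
    Commute (PresentedGroup.of (rels := Set.range (standardRelators p)) i)
      (PresentedGroup.of j) := by
  rw [← commutatorElement_eq_one_iff_commute, PresentedGroup.of, PresentedGroup.of,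
    ← map_commutatorElement]
  refine PresentedGroup.one_of_mem ?_
  fin_cases i <;> fin_cases j <;> simp [standardRelators, Matrix.range_cons] at hij ⊢

section

variable [NeZero p]

def cubeToPresented : ZModCube p →* PresentedGroup (Set.range (standardRelators p)) :=
  let y i := zmodPowHom p (of_pow_eq_one p i)
  (y 0).noncommCoprod ((y 1).noncommCoprod (y 2) fun _ _ =>
      (commute_of_lt p (by decide)).pow_pow _ _)
    fun _ _ => ((commute_of_lt p (by decide)).pow_pow _ _).mul_right
      ((commute_of_lt p (by decide)).pow_pow _ _)

def presentedToCube : PresentedGroup (Set.range (standardRelators p)) →* ZModCube p :=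
  PresentedGroup.toGroup (lift_cubeGen_standardRelators p)

end

theorem isPresentation_zmodCube [Fact (1 < p)] : IsPresentation (ZModCube p) 3 6 := by
  refine ⟨standardRelators p,
    ⟨MonoidHom.toMulEquiv (cubeToPresented p) (presentedToCube p) ?_ ?_⟩⟩
  · ext g <;> simp [cubeToPresented, presentedToCube, zmodPowHom, cubeGen, ofAdd_one_pow_val]
  · refine PresentedGroup.ext fun i => ?_
    fin_cases i <;> simp [cubeToPresented, presentedToCube, zmodPowHom, cubeGen, ZMod.val_one]

end StandardPresentation

end Deficiency

theorem IsPresentation.of_mulEquiv {Γ Γ' : Type} [Group Γ] [Group Γ'] (e : Γ ≃* Γ')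
    {a b : ℕ} (h : IsPresentation Γ' a b) : IsPresentation Γ a b :=
  h.imp fun _ ⟨e'⟩ => ⟨e.trans e'⟩

theorem IsPresentation.pow_mul_card_wedgeSpan_le {p n a b : ℕ} [NeZero p]
    (h : IsPresentation (Multiplicative (Fin n → ZMod p)) a b) :
    p ^ a * Nat.card (wedgeSpan (Fin n) (ZMod p)) ≤ p ^ b := by
  obtain ⟨r, ⟨e⟩⟩ := h
  refine Deficiency.pow_mul_card_wedgeSpan_le (φ := e.symm.toMonoidHom.comp (PresentedGroup.mk _))
    (r := r) (e.symm.surjective.comp (PresentedGroup.mk_surjective _)) ?_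
  ext w
  simp [PresentedGroup.mk_eq_one_iff]

def mulEquivFinThree (R : Type*) [AddCommGroup R] :
    Multiplicative R × Multiplicative R × Multiplicative R ≃* Multiplicative (Fin 3 → R) where
  toFun g := .ofAdd ![g.1.toAdd, g.2.1.toAdd, g.2.2.toAdd]
  invFun f := (.ofAdd (f.toAdd 0), .ofAdd (f.toAdd 1), .ofAdd (f.toAdd 2))
  left_inv _ := rfl
  right_inv f := by
    apply Multiplicative.toAdd.injective
    funext i
    fin_cases i <;> rfl
  map_mul' _ _ := by
    apply Multiplicative.toAdd.injective
    funext i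
    fin_cases i <;> rfl

theorem IsPresentation.add_three_le {p a b : ℕ} [Fact (1 < p)]
    (h : IsPresentation (Deficiency.ZModCube p) a b) : a + 3 ≤ b := by
  have hbound := (h.of_mulEquiv (mulEquivFinThree (ZMod p)).symm).pow_mul_card_wedgeSpan_le
  have hwedge := pow_three_le_card_wedgeSpan (R := ZMod p)
  rw [Nat.card_zmod] at hwedge
  have hpow : p ^ (a + 3) ≤ p ^ b :=
    calc p ^ (a + 3) = p ^ a * p ^ 3 := pow_add p a 3
      _ ≤ p ^ a * Nat.card (wedgeSpan (Fin 3) (ZMod p)) := Nat.mul_le_mul_left _ hwedge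
      _ ≤ p ^ b := hbound
  exact (Nat.pow_le_pow_iff_right Fact.out).mp hpow

/-- `def((ℤ/p)³) = -3` for every prime `p`. -/
theorem deficiency_zmod_pow_three (p : ℕ) (hp : p.Prime) :
    HasDeficiency
      (Multiplicative (ZMod p) × Multiplicative (ZMod p) × Multiplicative (ZMod p))
      (-3) := by
  have : Fact (1 < p) := ⟨hp.one_lt⟩
  refine ⟨⟨3, 6, Deficiency.isPresentation_zmodCube p, by norm_num⟩, fun a b h => ?_⟩
  have := h.add_three_le
  omega
end

section
/- Let Γ be a fully residually free group that is non-abelian (there exist a, b ∈ Γ with ab ≠ ba). Then Γ admits a surjective group homomorphism onto the free group of rank 2. -/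
/-!
Injectivity on `{a * b, b * a}` yields a homomorphism `φ` to a free group under which `a` and `b`
still do not commute. The image of `φ` is free by Nielsen–Schreier, and a free group on at most one
generator is cyclic, so this image has at least two basis elements. Collapsing the basis onto
`Fin 2` then gives a surjection onto the free group of rank 2.
-/

/-- A group `Γ` is fully residually free if for every finite subset `S ⊆ Γ` there is a
homomorphism to a free group of finite rank that is injective on `S`. -/
def FullyResiduallyFree (Γ : Type) [Group Γ] : Prop :=
  ∀ S : Finset Γ, ∃ (n : ℕ) (φ : Γ →* FreeGroup (Fin n)), Set.InjOn φ ↑S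

theorem FreeGroup.commute_of_subsingleton {X : Type*} [Subsingleton X] (g h : FreeGroup X) :
    Commute g h := by
  cases isEmpty_or_nonempty X
  · rw [Subsingleton.elim g h]
  · have : Unique X := uniqueOfSubsingleton (Classical.arbitrary X)
    exact IsCyclic.commGroup.mul_comm g h

theorem IsFreeGroup.nontrivial_generators_of_not_commute {G : Type*} [Group G] [IsFreeGroup G]
    {g h : G} (hgh : ¬Commute g h) : Nontrivial (IsFreeGroup.Generators G) := by
  by_contra hX
  rw [not_nontrivial_iff_subsingleton] at hX
  apply hgh
  let e := IsFreeGroup.toFreeGroup G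
  simpa using (FreeGroup.commute_of_subsingleton (e g) (e h)).map e.symm

theorem exists_surjective_fin_two (X : Type*) [Nontrivial X] : ∃ f : X → Fin 2, f.Surjective := by
  classical
  obtain ⟨x, y, hxy⟩ := exists_pair_ne X
  refine ⟨fun z => if z = x then 0 else 1, fun i => ?_⟩
  fin_cases i
  · exact ⟨x, by simp⟩
  · exact ⟨y, by simp [hxy.symm]⟩

theorem IsFreeGroup.exists_surjective_freeGroup_fin_two_of_not_commute {G : Type*} [Group G]
    [IsFreeGroup G] {g h : G} (hgh : ¬Commute g h) :
    ∃ φ : G →* FreeGroup (Fin 2), Function.Surjective φ := by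
  have := nontrivial_generators_of_not_commute hgh
  obtain ⟨f, hf⟩ := exists_surjective_fin_two (Generators G)
  exact ⟨(FreeGroup.map f).comp (toFreeGroup G).toMonoidHom,
    (FreeGroup.map_surjective hf).comp (toFreeGroup G).surjective⟩

theorem FullyResiduallyFree.exists_hom_not_commute {Γ : Type} [Group Γ]
    (hΓ : FullyResiduallyFree Γ) {a b : Γ} (hab : ¬Commute a b) :
    ∃ (n : ℕ) (φ : Γ →* FreeGroup (Fin n)), ¬Commute (φ a) (φ b) := by
  classical
  obtain ⟨n, φ, hφ⟩ := hΓ {a * b, b * a}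
  refine ⟨n, φ, fun h => hab (hφ (by simp) (by simp) ?_)⟩
  simpa only [map_mul] using h.eq

/-- A non-abelian fully residually free group surjects onto the free group of rank 2. -/
theorem fullyResiduallyFree_nonabelian_surjects_free (Γ : Type) [Group Γ]
    (hfrf : FullyResiduallyFree Γ) (hna : ∃ a b : Γ, a * b ≠ b * a) :
    ∃ φ : Γ →* FreeGroup (Fin 2), Function.Surjective φ := by
  obtain ⟨a, b, hab⟩ := hna
  obtain ⟨n, φ, hφ⟩ := hfrf.exists_hom_not_commute hab
  have hψ : ¬Commute (φ.rangeRestrict a) (φ.rangeRestrict b) := fun h =>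
    hφ (by simpa using h.map φ.range.subtype)
  obtain ⟨χ, hχ⟩ := IsFreeGroup.exists_surjective_freeGroup_fin_two_of_not_commute hψ
  exact ⟨χ.comp φ.rangeRestrict, hχ.comp φ.rangeRestrict_surjective⟩
end
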